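/- arXiv:1507.00989 — 6 statements merged into one kernel-verified Lean document; each statement's English description precedes it below -/
import Mathlib

section
/- A homeomorphism f of a compact metric space X has the pseudo-orbit tracing property if and only if every point of X is shadowable. -/
open Metric Set

/-- Natural iterates of a homeomorphism. -/
def hnpow {X : Type*} [TopologicalSpace X] (f : X ≃ₜ X) : ℕ → X ≃ₜ X
  | 0 => Homeomorph.refl X
  | n+1 => (hnpow f n).trans f

/-- Integer iterates `fⁿ`, `n ∈ ℤ`, of a homeomorphism. -/
def hpow {X : Type*} [TopologicalSpace X] (f : X ≃ₜ X) : ℤ → X ≃ₜ X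
  | Int.ofNat n => hnpow f n
  | Int.negSucc n => hnpow f.symm (n+1)

variable {X : Type*} [MetricSpace X]

/-- `ξ` is a `δ`-pseudo-orbit of `f`. -/
def IsPseudoOrbit (f : X ≃ₜ X) (δ : ℝ) (ξ : ℤ → X) : Prop :=
  ∀ n : ℤ, dist (f (ξ n)) (ξ (n+1)) ≤ δ

/-- `ξ` is `ε`-shadowed by the orbit of `y`. -/
def ShadowedBy (f : X ≃ₜ X) (ε : ℝ) (y : X) (ξ : ℤ → X) : Prop :=
  ∀ n : ℤ, dist (hpow f n y) (ξ n) ≤ ε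

/-- `x` is a shadowable point of `f`. -/
def ShadowablePoint (f : X ≃ₜ X) (x : X) : Prop :=
  ∀ ε > 0, ∃ δ > 0, ∀ ξ : ℤ → X, IsPseudoOrbit f δ ξ → ξ 0 = x →
    ∃ y, ShadowedBy f ε y ξ

/-- `f` has the pseudo-orbit tracing property. -/
def POTP (f : X ≃ₜ X) : Prop :=
  ∀ ε > 0, ∃ δ > 0, ∀ ξ : ℤ → X, IsPseudoOrbit f δ ξ → ∃ y, ShadowedBy f ε y ξ

/-- `x` is a nonwandering point of `f`. -/
def NonWandering (f : X ≃ₜ X) (x : X) : Prop :=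
  ∀ U ∈ nhds x, ∃ k : ℕ, 0 < k ∧ ((hpow f (k : ℤ)) '' U ∩ U).Nonempty

/-- `x` is a chain recurrent point of `f`. -/
def ChainRecurrent (f : X ≃ₜ X) (x : X) : Prop :=
  ∀ ρ > 0, ∃ n : ℕ, 0 < n ∧ ∃ c : ℕ → X, c 0 = x ∧ c n = x ∧
    ∀ i < n, dist (f (c i)) (c (i+1)) ≤ ρ

/-- `f` is distal: `inf_{n∈ℤ} d(fⁿ x, fⁿ y) > 0` for all distinct `x, y`. -/
def Distal (f : X ≃ₜ X) : Prop :=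
  ∀ x y : X, x ≠ y → ∃ c > 0, ∀ n : ℤ, c ≤ dist (hpow f n x) (hpow f n y)

/-- `f` is minimal: every full orbit is dense. -/
def MinimalHomeo (f : X ≃ₜ X) : Prop :=
  ∀ x : X, Dense (Set.range fun n : ℤ => hpow f n x)

/-- `f` is equicontinuous (uniformly, over all integer iterates). -/
def EquicontinuousHomeo (f : X ≃ₜ X) : Prop :=
  ∀ α > 0, ∃ β > 0, ∀ x y : X, dist x y ≤ β → ∀ n : ℤ, dist (hpow f n x) (hpow f n y) ≤ α

open Filter Function Topology

/- A shadowable point `x` is shadowable uniformly on a neighbourhood: a pseudo-orbit starting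
near `x` becomes, after its initial point is moved to `x`, a slightly coarser pseudo-orbit through
`x` (by continuity of `f` at `x`), and a shadowing orbit of the modified sequence still shadows the
original one. Compactness of `X` then turns these local shadowing constants into a single one. -/

theorem CompactSpace.exists_pos_forall_of_exists_pos_eventually {Y : Type*} [TopologicalSpace Y]
    [CompactSpace Y] {Q : ℝ → Y → Prop} (hQ : ∀ y, Antitone (Q · y))
    (hloc : ∀ y, ∃ δ > 0, ∀ᶠ z in 𝓝 y, Q δ z) : ∃ δ > 0, ∀ z, Q δ z := by
  have hev : ∀ᶠ δ in 𝓝 (0 : ℝ), ∀ z ∈ univ, 0 < δ → Q δ z := by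
    refine isCompact_univ.eventually_forall_of_forall_eventually fun y _ => ?_
    obtain ⟨δ, hδ, hy⟩ := hloc y
    filter_upwards [prod_mem_nhds (Iio_mem_nhds hδ) hy] with p ⟨hp, hz⟩ _
    exact hQ p.2 (le_of_lt hp) hz
  obtain ⟨δ, hδ, hpos⟩ := ((hev.filter_mono nhdsWithin_le_nhds).and
    (self_mem_nhdsWithin : Ioi (0 : ℝ) ∈ 𝓝[>] 0)).exists
  exact ⟨δ, hpos, fun z => hδ z trivial hpos⟩

variable {f : X ≃ₜ X}

theorem IsPseudoOrbit.mono {δ δ' : ℝ} {ξ : ℤ → X} (hξ : IsPseudoOrbit f δ ξ) (h : δ ≤ δ') :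
    IsPseudoOrbit f δ' ξ :=
  fun n => (hξ n).trans h

theorem IsPseudoOrbit.update {δ ρ : ℝ} {ξ : ℤ → X} (hξ : IsPseudoOrbit f δ ξ) (k : ℤ) (x : X)
    (hf : dist (f x) (f (ξ k)) ≤ ρ) (hx : dist (ξ k) x ≤ ρ) :
    IsPseudoOrbit f (δ + ρ) (update ξ k x) := by
  have hρ : 0 ≤ ρ := dist_nonneg.trans hx
  intro n
  rcases eq_or_ne n k with rfl | hn
  · rw [update_self, update_of_ne (by omega)]
    calc dist (f x) (ξ (n + 1)) ≤ dist (f x) (f (ξ n)) + dist (f (ξ n)) (ξ (n + 1)) :=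
          dist_triangle _ _ _
      _ ≤ δ + ρ := by linarith [hξ n]
  rw [update_of_ne hn]
  rcases eq_or_ne (n + 1) k with rfl | hn'
  · rw [update_self]
    calc dist (f (ξ n)) x ≤ dist (f (ξ n)) (ξ (n + 1)) + dist (ξ (n + 1)) x := dist_triangle _ _ _
      _ ≤ δ + ρ := add_le_add (hξ n) hx
  · rw [update_of_ne hn']
    linarith [hξ n]

theorem ShadowedBy.mono {ε ε' : ℝ} {y : X} {ξ : ℤ → X} (hy : ShadowedBy f ε y ξ) (h : ε ≤ ε') :
    ShadowedBy f ε' y ξ :=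
  fun n => (hy n).trans h

theorem ShadowedBy.of_dist_le {ε ρ : ℝ} {y : X} {ξ ξ' : ℤ → X} (hy : ShadowedBy f ε y ξ)
    (h : ∀ n, dist (ξ n) (ξ' n) ≤ ρ) : ShadowedBy f (ε + ρ) y ξ' :=
  fun n => (dist_triangle _ _ _).trans (add_le_add (hy n) (h n))

theorem POTP.shadowablePoint (hf : POTP f) (x : X) : ShadowablePoint f x := fun ε hε =>
  let ⟨δ, hδ, H⟩ := hf ε hε
  ⟨δ, hδ, fun ξ hξ _ => H ξ hξ⟩

theorem ShadowablePoint.exists_pos_eventually {x : X} (hx : ShadowablePoint f x) {ε : ℝ}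
    (hε : 0 < ε) : ∃ δ > 0, ∀ᶠ z in 𝓝 x,
      ∀ ξ, IsPseudoOrbit f δ ξ → ξ 0 = z → ∃ y, ShadowedBy f ε y ξ := by
  obtain ⟨δ, hδ, hshadow⟩ := hx (ε / 2) (half_pos hε)
  refine ⟨δ / 2, half_pos hδ, ?_⟩
  have hfz : ∀ᶠ z in 𝓝 x, f z ∈ ball (f x) (δ / 2) :=
    f.continuous.continuousAt (ball_mem_nhds _ (half_pos hδ))
  have hz : ∀ᶠ z in 𝓝 x, z ∈ ball x (min (δ / 2) (ε / 2)) :=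
    ball_mem_nhds _ (lt_min (half_pos hδ) (half_pos hε))
  filter_upwards [hfz, hz] with z hfz hz ξ hξ rfl
  have hzx : dist (ξ 0) x < min (δ / 2) (ε / 2) := hz
  obtain ⟨y, hy⟩ := hshadow (update ξ 0 x)
    ((hξ.update 0 x (dist_comm (f (ξ 0)) (f x) ▸ hfz.le) (hzx.le.trans (min_le_left _ _))).mono
      (add_halves δ).le)
    (update_self 0 x ξ)
  have hclose : ∀ n, dist (update ξ 0 x n) (ξ n) ≤ ε / 2 := by
    intro n
    rcases eq_or_ne n 0 with rfl | hn
    · rw [update_self, dist_comm]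
      exact hzx.le.trans (min_le_right _ _)
    · rw [update_of_ne hn, dist_self]
      exact (half_pos hε).le
  exact ⟨y, (hy.of_dist_le hclose).mono (add_halves ε).le⟩

theorem stmt1 [CompactSpace X] (f : X ≃ₜ X) :
    POTP f ↔ ∀ x : X, ShadowablePoint f x := by
  refine ⟨POTP.shadowablePoint, fun h ε hε => ?_⟩
  obtain ⟨δ, hδ, H⟩ := CompactSpace.exists_pos_forall_of_exists_pos_eventually
    (Q := fun δ z => ∀ ξ, IsPseudoOrbit f δ ξ → ξ 0 = z → ∃ y, ShadowedBy f ε y ξ)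
    (fun _ _ _ hle H ξ hξ => H ξ (hξ.mono hle)) fun x => (h x).exists_pos_eventually hε
  exact ⟨δ, hδ, fun ξ hξ => H (ξ 0) ξ hξ rfl⟩
end

section
/- Every chain recurrent shadowable point of a homeomorphism of a compact metric space is nonwandering: CR(f) ∩ Sh(f) ⊆ Ω(f). -/
open Metric Set

variable {X : Type*} [MetricSpace X]

/-
A chain recurrent point `x` lies on a closed `δ`-chain of some length `n`; repeating that chain
periodically gives a `δ`-pseudo-orbit through `x` which returns to `x` at time `n`. If `x` is
shadowable, some orbit `ε/2`-shadows this pseudo-orbit, so `y` and `fⁿ y` are both `ε/2`-close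
to `x`, which makes `x` nonwandering.
-/

theorem Int.toNat_add_one_emod (k : ℤ) {n : ℕ} (hn : 0 < n) :
    ((k + 1) % n).toNat = ((k % n).toNat + 1) % n := by
  have hnZ : (n : ℤ) ≠ 0 := by exact_mod_cast hn.ne'
  zify
  rw [Int.toNat_of_nonneg (Int.emod_nonneg _ hnZ), Int.toNat_of_nonneg (Int.emod_nonneg _ hnZ),
    Int.emod_add_emod]

def periodicExtension {α : Type*} (c : ℕ → α) (n : ℕ) (k : ℤ) : α :=
  c (k % n).toNat

theorem periodicExtension_natCast_mul {α : Type*} (c : ℕ → α) (n m : ℕ) :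
    periodicExtension c n (n * m) = c 0 := by
  simp [periodicExtension]

theorem isPseudoOrbit_periodicExtension {f : X ≃ₜ X} {δ : ℝ} {c : ℕ → X} {n : ℕ} (hn : 0 < n)
    (hcycle : c n = c 0) (hstep : ∀ i < n, dist (f (c i)) (c (i + 1)) ≤ δ) :
    IsPseudoOrbit f δ (periodicExtension c n) := by
  intro k
  set i := (k % n).toNat
  have hi : i < n := by
    have := Int.emod_lt_of_pos k (by exact_mod_cast hn : (0 : ℤ) < n)
    omega
  have hwrap : c ((i + 1) % n) = c (i + 1) := by
    rcases Nat.lt_or_ge (i + 1) n with hlt | hge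
    · rw [Nat.mod_eq_of_lt hlt]
    · rw [show i + 1 = n by omega, Nat.mod_self, hcycle]
  simp only [periodicExtension, Int.toNat_add_one_emod k hn]
  rw [hwrap]
  exact hstep i hi

theorem ChainRecurrent.exists_periodic_pseudoOrbit {f : X ≃ₜ X} {x : X}
    (hx : ChainRecurrent f x) {δ : ℝ} (hδ : 0 < δ) :
    ∃ n : ℕ, 0 < n ∧ ∃ ξ : ℤ → X, IsPseudoOrbit f δ ξ ∧ ξ 0 = x ∧ ξ n = x := by
  obtain ⟨n, hn, c, hc0, hcn, hstep⟩ := hx δ hδ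
  refine ⟨n, hn, periodicExtension c n, isPseudoOrbit_periodicExtension hn (hcn.trans hc0.symm)
    hstep, ?_, ?_⟩
  · simpa [hc0] using periodicExtension_natCast_mul c n 0
  · simpa [hc0] using periodicExtension_natCast_mul c n 1

theorem stmt5_general (f : X ≃ₜ X) :
    {x | ChainRecurrent f x} ∩ {x | ShadowablePoint f x} ⊆ {x | NonWandering f x} := by
  rintro x ⟨hcr, hsh⟩ U hU
  obtain ⟨ε, hε, hball⟩ := Metric.mem_nhds_iff.1 hU
  obtain ⟨δ, hδ, hshadow⟩ := hsh (ε / 2) (half_pos hε)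
  obtain ⟨n, hn, ξ, hξ, hξ0, hξn⟩ := hcr.exists_periodic_pseudoOrbit hδ
  obtain ⟨y, hy⟩ := hshadow ξ hξ hξ0
  have hclose : ∀ k : ℤ, ξ k = x → hpow f k y ∈ U := fun k hk =>
    hball (by rw [mem_ball, ← hk]; linarith [hy k])
  exact ⟨n, hn, hpow f n y, ⟨y, hclose 0 hξ0, rfl⟩, hclose n hξn⟩

theorem stmt5 [CompactSpace X] (f : X ≃ₜ X) :
    {x | ChainRecurrent f x} ∩ {x | ShadowablePoint f x} ⊆ {x | NonWandering f x} :=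
  stmt5_general f
end

section
/- If every chain recurrent point of a homeomorphism f of a compact metric space is shadowable, then the chain recurrent set equals the nonwandering set: CR(f) = Ω(f). -/
open Metric Set

variable {X : Type*} [MetricSpace X]

/-!
Ω(f) ⊆ CR(f) holds for any homeomorphism: if `w` and `fᵏ w` are both close to `x`, the orbit
segment `w, f w, …, fᵏ w` with its endpoints replaced by `x` is a closed chain at `x`.
Conversely, a closed `δ`-chain at a shadowable point `x`, repeated periodically, is a
`δ`-pseudo-orbit through `x` at times `0` and `n`; a point `y` whose orbit `ε`-shadows it has
`y` and `fⁿ y` in the `ε`-ball around `x`, so `x` is nonwandering.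
-/

lemma hpow_natCast_succ_apply {Y : Type*} [TopologicalSpace Y] (f : Y ≃ₜ Y) (n : ℕ) (y : Y) :
    hpow f ((n + 1 : ℕ) : ℤ) y = f (hpow f n y) := rfl

lemma Int.toNat_emod_add_one {n : ℕ} (hn : 0 < n) (m : ℤ) :
    ((m + 1) % n).toNat = ((m % n).toNat + 1) % n := by
  have hn' : (n : ℤ) ≠ 0 := by exact_mod_cast hn.ne'
  zify
  rw [Int.toNat_of_nonneg (Int.emod_nonneg _ hn'), Int.toNat_of_nonneg (Int.emod_nonneg _ hn'),
    Int.emod_add_emod]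

lemma isPseudoOrbit_of_closed_chain {f : X ≃ₜ X} {δ : ℝ} {n : ℕ} (hn : 0 < n) {c : ℕ → X}
    (hclosed : c n = c 0) (hchain : ∀ i < n, dist (f (c i)) (c (i + 1)) ≤ δ) :
    IsPseudoOrbit f δ fun m : ℤ => c (m % n).toNat := by
  intro m
  have hlt : (m % n).toNat < n := by
    have := Int.emod_lt_of_pos m (Int.natCast_pos.mpr hn)
    omega
  have hperiodic : c (((m % n).toNat + 1) % n) = c ((m % n).toNat + 1) := by
    rcases (Nat.add_one_le_of_lt hlt).lt_or_eq with hlt' | heq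
    · rw [Nat.mod_eq_of_lt hlt']
    · rw [heq, Nat.mod_self, hclosed]
  simp only [Int.toNat_emod_add_one hn, hperiodic]
  exact hchain _ hlt

lemma ShadowablePoint.nonWandering {f : X ≃ₜ X} {x : X} (hsh : ShadowablePoint f x)
    (hcr : ChainRecurrent f x) : NonWandering f x := by
  intro U hU
  obtain ⟨ε, hε, hball⟩ := Metric.mem_nhds_iff.mp hU
  obtain ⟨δ, hδ, hshadow⟩ := hsh (ε / 2) (half_pos hε)
  obtain ⟨n, hn, c, hc0, hcn, hchain⟩ := hcr δ hδ
  set ξ : ℤ → X := fun m => c (m % n).toNat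
  have hξ0 : ξ 0 = x := by simp [ξ, hc0]
  have hξn : ξ n = x := by simp [ξ, hc0]
  obtain ⟨y, hy⟩ := hshadow ξ (isPseudoOrbit_of_closed_chain hn (hcn.trans hc0.symm) hchain) hξ0
  have hy_mem : ∀ m : ℤ, ξ m = x → hpow f m y ∈ U := fun m hm =>
    hball <| mem_ball.mpr <| (hm ▸ hy m).trans_lt (half_lt_self hε)
  exact ⟨n, hn, hpow f n y, mem_image_of_mem _ (hy_mem 0 hξ0), hy_mem n hξn⟩

lemma NonWandering.chainRecurrent {f : X ≃ₜ X} {x : X} (hnw : NonWandering f x) :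
    ChainRecurrent f x := by
  intro ρ hρ
  obtain ⟨η, hη, hcont⟩ := Metric.continuousAt_iff.mp (f.continuous.continuousAt (x := x))
    (ρ / 2) (half_pos hρ)
  obtain ⟨k, hk, _, ⟨w, hw, rfl⟩, hwk⟩ :=
    hnw (ball x (min η (ρ / 2))) (ball_mem_nhds x (lt_min hη (half_pos hρ)))
  let c : ℕ → X := fun i => if i = 0 ∨ i = k then x else hpow f i w
  have hc : ∀ i ≤ k, c i = hpow f i w ∨ (c i = x ∧ dist (hpow f i w) x < min η (ρ / 2)) := by
    intro i hi
    by_cases h : i = 0 ∨ i = k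
    · refine .inr ⟨if_pos h, ?_⟩
      rcases h with rfl | rfl
      · exact mem_ball.mp hw
      · exact mem_ball.mp hwk
    · exact .inl (if_neg h)
  refine ⟨k, hk, c, if_pos (.inl rfl), if_pos (.inr rfl), fun i hi => ?_⟩
  have hstart : dist (f (c i)) (hpow f (i + 1 : ℕ) w) < ρ / 2 := by
    rw [hpow_natCast_succ_apply]
    rcases hc i hi.le with h | ⟨h, hd⟩
    · rw [h, dist_self]; exact half_pos hρ
    · rw [h, dist_comm]; exact hcont (hd.trans_le (min_le_left _ _))
  have hend : dist (hpow f (i + 1 : ℕ) w) (c (i + 1)) < ρ / 2 := by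
    rcases hc (i + 1) hi with h | ⟨h, hd⟩
    · rw [h, dist_self]; exact half_pos hρ
    · rw [h]; exact hd.trans_le (min_le_right _ _)
  linarith [dist_triangle (f (c i)) (hpow f (i + 1 : ℕ) w) (c (i + 1))]

theorem stmt6_general (f : X ≃ₜ X)
    (h : ∀ x : X, ChainRecurrent f x → ShadowablePoint f x) :
    {x | ChainRecurrent f x} = {x | NonWandering f x} :=
  Set.ext fun x => ⟨fun hcr => (h x hcr).nonWandering hcr, NonWandering.chainRecurrent⟩

theorem stmt6 [CompactSpace X] (f : X ≃ₜ X)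
    (h : ∀ x : X, ChainRecurrent f x → ShadowablePoint f x) :
    {x | ChainRecurrent f x} = {x | NonWandering f x} :=
  stmt6_general f h
end

section
/- A minimal homeomorphism of a compact connected metric space with more than one point has no shadowable points. -/
open Metric Set

variable {X : Type*} [MetricSpace X]

/-!
Suppose `x` is shadowable and pick `q ≠ x`, `ε = d(q, x) / 2`. A minimal homeomorphism of a
compact space is recurrent, so `fᴾ x` is `δ`-close to `x` for some `P > 0`, and the periodic
sequence `f^(n mod P) x` is a `δ`-pseudo-orbit through `x`. A point `y` shadowing it has its whole
`fᴾ`-orbit in the closed `ε`-ball about `x`. On a connected space, however, every nonzero power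
of a minimal homeomorphism `g` is minimal: the translates `gⁱ M` of a `gᴾ`-minimal set `M` are
`gᴾ`-minimal, hence equal to `M` or disjoint from it, and finitely many of them cover the space,
so `M` is clopen. Thus the `fᴾ`-orbit of `y` is dense, which puts `q` in the `ε`-ball.
-/

section Topological

variable {α : Type*} [TopologicalSpace α] {g h : α ≃ₜ α}

lemma hnpow_eq_pow (f : α ≃ₜ α) (n : ℕ) : hnpow f n = f ^ n := by
  induction n with
  | zero => rfl
  | succ n ih => rw [hnpow, ih, pow_succ']; rfl

lemma hpow_eq_zpow (f : α ≃ₜ α) (n : ℤ) : hpow f n = f ^ n := by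
  cases n with
  | ofNat n => exact hnpow_eq_pow f n
  | negSucc n => exact (hnpow_eq_pow f.symm (n + 1)).trans (inv_pow f (n + 1))

lemma eq_univ_of_finite_closed_cover {ι : Type*} [PreconnectedSpace α] {s : Set ι}
    (hs : s.Finite) {A : ι → Set α} (hcl : ∀ i ∈ s, IsClosed (A i))
    (hcov : ⋃ i ∈ s, A i = univ) {j : ι} (hj : j ∈ s) (hne : (A j).Nonempty)
    (hdisj : ∀ i ∈ s, A i = A j ∨ Disjoint (A i) (A j)) : A j = univ := by
  have hcompl : (A j)ᶜ = ⋃ i ∈ {i ∈ s | Disjoint (A i) (A j)}, A i := by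
    ext z
    simp only [mem_compl_iff, mem_iUnion, mem_ofPred_eq, exists_prop]
    constructor
    · intro hz
      obtain ⟨i, hi, hzi⟩ := mem_iUnion₂.1 (hcov.symm ▸ mem_univ z : z ∈ ⋃ i ∈ s, A i)
      refine ⟨i, ⟨hi, (hdisj i hi).resolve_left ?_⟩, hzi⟩
      exact fun hij => hz (hij ▸ hzi)
    · rintro ⟨i, ⟨-, hij⟩, hzi⟩ hzj
      exact hij.ne_of_mem hzi hzj rfl
  have hopen : IsOpen (A j) := by
    rw [← isClosed_compl_iff, hcompl]
    exact (hs.subset (sep_subset _ _)).isClosed_biUnion fun i hi => hcl i hi.1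
  exact IsClopen.eq_univ ⟨hcl j hj, hopen⟩ hne

def IsZPowInvariant (h : α ≃ₜ α) (A : Set α) : Prop :=
  ∀ n : ℤ, MapsTo (h ^ n) A A

lemma IsZPowInvariant.image_zpow {A : Set α} (hA : IsZPowInvariant h A) (n : ℤ) :
    ⇑(h ^ n) '' A = A := by
  refine (hA n).image_subset.antisymm fun a ha => ⟨(h ^ (-n)) a, hA (-n) ha, ?_⟩
  rw [← Homeomorph.mul_apply, ← zpow_add, add_neg_cancel, zpow_zero, Homeomorph.one_apply]

lemma IsZPowInvariant.image_of_commute {A : Set α} (hA : IsZPowInvariant h A)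
    (hgh : Commute g h) : IsZPowInvariant h (g '' A) := by
  rintro n _ ⟨a, ha, rfl⟩
  refine ⟨(h ^ n) a, hA n ha, ?_⟩
  rw [← Homeomorph.mul_apply, ← Homeomorph.mul_apply, (hgh.zpow_right n).eq]

lemma isZPowInvariant_closure_orbit (h : α ≃ₜ α) (x : α) :
    IsZPowInvariant h (closure (range fun n : ℤ => (h ^ n) x)) := by
  refine fun n => MapsTo.closure ?_ (h ^ n).continuous
  rintro _ ⟨k, rfl⟩
  exact ⟨n + k, by simp only [zpow_add, Homeomorph.mul_apply]⟩

def IsMinimalSet (h : α ≃ₜ α) (M : Set α) : Prop :=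
  Minimal (fun A : Set α => IsClosed A ∧ A.Nonempty ∧ IsZPowInvariant h A) M

lemma exists_isMinimalSet_subset [CompactSpace α] {A : Set α} (hcl : IsClosed A)
    (hne : A.Nonempty) (hinv : IsZPowInvariant h A) : ∃ M ⊆ A, IsMinimalSet h M := by
  refine zorn_superset_nonempty {A | IsClosed A ∧ A.Nonempty ∧ IsZPowInvariant h A}
    (fun c hc hchain hcne => ⟨⋂₀ c, ⟨?_, ?_, ?_⟩, fun s hs => sInter_subset_of_mem hs⟩)
    A ⟨hcl, hne, hinv⟩
  · exact isClosed_sInter fun s hs => (hc hs).1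
  · have : Nonempty c := hcne.to_subtype
    exact IsCompact.nonempty_sInter_of_directed_nonempty_isCompact_isClosed
      (IsChain.directedOn (r := fun a b : Set α => a ⊇ b) hchain.symm) (fun s hs => (hc hs).2.1)
      (fun s hs => (hc hs).1.isCompact) fun s hs => (hc hs).1
  · exact fun n => mapsTo_sInter.2 fun s hs =>
      ((hc hs).2.2 n).mono (sInter_subset_of_mem hs) le_rfl

lemma IsMinimalSet.eq_or_disjoint {A B : Set α} (hA : IsMinimalSet h A) (hB : IsMinimalSet h B) :
    A = B ∨ Disjoint A B := by
  refine or_iff_not_imp_right.2 fun hAB => ?_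
  have hI : IsClosed (A ∩ B) ∧ (A ∩ B).Nonempty ∧ IsZPowInvariant h (A ∩ B) :=
    ⟨hA.prop.1.inter hB.prop.1, not_disjoint_iff_nonempty_inter.1 hAB,
      fun n => (hA.prop.2.2 n).inter_inter (hB.prop.2.2 n)⟩
  exact (hA.eq_of_subset hI inter_subset_left).symm.trans (hB.eq_of_subset hI inter_subset_right)

lemma IsMinimalSet.image_of_commute {M : Set α} (hM : IsMinimalSet h M) (hgh : Commute g h) :
    IsMinimalSet h (g '' M) := by
  refine ⟨⟨g.isClosedMap _ hM.prop.1, hM.prop.2.1.image g,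
    hM.prop.2.2.image_of_commute hgh⟩, fun B hB hBM => ?_⟩
  have hB' :
      IsClosed (g.symm '' B) ∧ (g.symm '' B).Nonempty ∧ IsZPowInvariant h (g.symm '' B) :=
    ⟨g.symm.isClosedMap _ hB.1, hB.2.1.image _, hB.2.2.image_of_commute hgh.inv_left⟩
  have hsub : g.symm '' B ⊆ M := by
    rintro _ ⟨b, hb, rfl⟩
    obtain ⟨m, hm, rfl⟩ := hBM hb
    rwa [g.symm_apply_apply]
  rw [← hM.eq_of_subset hB' hsub, image_image]
  simp

end Topological

section MinimalHomeo

variable {g h : X ≃ₜ X}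

lemma minimalHomeo_iff :
    MinimalHomeo h ↔
      ∀ A : Set X, IsClosed A → A.Nonempty → IsZPowInvariant h A → A = univ := by
  simp only [MinimalHomeo, hpow_eq_zpow]
  constructor
  · rintro hmin A hcl ⟨a, ha⟩ hinv
    exact eq_univ_of_univ_subset <|
      (hmin a).closure_eq ▸ closure_minimal (range_subset_iff.2 fun n => hinv n ha) hcl
  · intro H x
    exact dense_iff_closure_eq.2 <| H _ isClosed_closure (range_nonempty _).closure
      (isZPowInvariant_closure_orbit h x)

lemma IsMinimalSet.eq_univ_of_minimalHomeo [ConnectedSpace X] {P : ℤ} (hP : P ≠ 0) {M : Set X}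
    (hM : IsMinimalSet (g ^ P) M) (hg : MinimalHomeo g) : M = univ := by
  have hper : ∀ i : ℤ, ⇑(g ^ i) '' M = ⇑(g ^ (i % P)) '' M := fun i => by
    conv_lhs => rw [← Int.emod_add_mul_ediv i P, zpow_add, zpow_mul]
    change ⇑(g ^ (i % P)) ∘ ⇑((g ^ P) ^ (i / P)) '' M = _
    rw [image_comp, hM.prop.2.2.image_zpow]
  have hfin : ⋃ i ∈ Ico 0 |P|, ⇑(g ^ i) '' M = ⋃ i : ℤ, ⇑(g ^ i) '' M := by
    refine (iUnion₂_subset_iUnion _ _).antisymm (iUnion_subset fun i => ?_)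
    rw [hper i]
    exact subset_biUnion_of_mem (u := fun i => ⇑(g ^ i) '' M)
      ⟨Int.emod_nonneg i hP, Int.emod_lt_abs i hP⟩
  have hcl : ∀ i ∈ Ico 0 |P|, IsClosed (⇑(g ^ i) '' M) := fun i _ =>
    (g ^ i).isClosedMap _ hM.prop.1
  have hcov : ⋃ i : ℤ, ⇑(g ^ i) '' M = univ := by
    refine minimalHomeo_iff.1 hg _ ?_ ?_ ?_
    · exact hfin ▸ (finite_Ico 0 |P|).isClosed_biUnion hcl
    · exact (hM.prop.2.1.image _).mono (subset_iUnion_of_subset 0 subset_rfl)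
    · rintro n _ ⟨_, ⟨i, rfl⟩, ⟨m, hm, rfl⟩⟩
      exact mem_iUnion.2 ⟨n + i, m, hm, by rw [zpow_add, Homeomorph.mul_apply]⟩
  have h0 : (0 : ℤ) ∈ Ico 0 |P| := ⟨le_rfl, abs_pos.2 hP⟩
  have hM0 : ⇑(g ^ (0 : ℤ)) '' M = M := by simp only [zpow_zero]; exact image_id M
  have key := eq_univ_of_finite_closed_cover (A := fun i : ℤ => ⇑(g ^ i) '' M)
    (finite_Ico 0 |P|) hcl (hfin.trans hcov) h0 (by rw [hM0]; exact hM.prop.2.1) fun i _ => by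
      rw [hM0]
      exact (hM.image_of_commute (Commute.zpow_zpow_self g i P)).eq_or_disjoint hM
  rwa [hM0] at key

theorem MinimalHomeo.zpow [CompactSpace X] [ConnectedSpace X] (hg : MinimalHomeo g) {P : ℤ}
    (hP : P ≠ 0) : MinimalHomeo (g ^ P) := by
  refine minimalHomeo_iff.2 fun A hA hne hinv => ?_
  obtain ⟨M, hMA, hM⟩ := exists_isMinimalSet_subset hA hne hinv
  exact eq_univ_of_univ_subset (hM.eq_univ_of_minimalHomeo hP hg ▸ hMA)

end MinimalHomeo

section Recurrence

open Filter Topology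

variable {f : X ≃ₜ X}

lemma MinimalHomeo.omegaLimit_eq_univ [CompactSpace X] (hf : MinimalHomeo f) (x : X) :
    omegaLimit atTop (fun n : ℤ => ⇑(f ^ n)) {x} = univ := by
  refine minimalHomeo_iff.1 hf _ (isClosed_omegaLimit _ _ _)
    (nonempty_omegaLimit _ _ _ (singleton_nonempty x)) fun n => ?_
  have hshift : MapsTo (f ^ n) (omegaLimit atTop (fun t : ℤ => ⇑(f ^ t)) {x})
      (omegaLimit atTop (fun t : ℤ => ⇑(f ^ (n + t))) {x}) :=
    mapsTo_omegaLimit _ (mapsTo_id _) (fun t y => by rw [zpow_add, Homeomorph.mul_apply, id])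
      (f ^ n).continuous
  exact hshift.mono_right <|
    omegaLimit_subset_of_tendsto (fun t : ℤ => ⇑(f ^ t)) {x} (m := (n + ·))
      (tendsto_atTop_add_const_left _ n tendsto_id)

lemma MinimalHomeo.exists_pos_zpow_mem [CompactSpace X] (hf : MinimalHomeo f) (x : X)
    {U : Set X} (hU : U ∈ 𝓝 x) : ∃ n : ℤ, 0 < n ∧ (f ^ n) x ∈ U := by
  have hx : x ∈ omegaLimit atTop (fun n : ℤ => ⇑(f ^ n)) {x} :=
    hf.omegaLimit_eq_univ x ▸ mem_univ x
  exact frequently_atTop.1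
    ((mem_omegaLimit_singleton_iff_mapClusterPt _ _ x x).1 hx |>.frequently hU) 1

end Recurrence

lemma isPseudoOrbit_zpow_emod (f : X ≃ₜ X) {δ : ℝ} (hδ : 0 ≤ δ) {P : ℤ} (hP : 0 < P)
    {x : X} (hx : dist ((f ^ P) x) x ≤ δ) : IsPseudoOrbit f δ fun n => (f ^ (n % P)) x := by
  intro n
  have hstep : f ((f ^ (n % P)) x) = (f ^ (n % P + 1)) x := by
    rw [add_comm, zpow_one_add, Homeomorph.mul_apply]
  change dist _ ((f ^ ((n + 1) % P)) x) ≤ δ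
  rw [hstep, ← Int.emod_add_emod n P 1]
  rcases (Int.add_one_le_iff.2 (Int.emod_lt_of_pos n hP)).lt_or_eq with hlt | heq
  · rw [Int.emod_eq_of_lt (by have := Int.emod_nonneg n hP.ne'; omega) hlt, dist_self]
    exact hδ
  · rwa [heq, Int.emod_self, zpow_zero, Homeomorph.one_apply]

theorem stmt9 [CompactSpace X] [ConnectedSpace X] [Nontrivial X]
    (f : X ≃ₜ X) (h : MinimalHomeo f) : ∀ x : X, ¬ ShadowablePoint f x := by
  intro x hx
  obtain ⟨q, hq⟩ := exists_ne x
  obtain ⟨δ, hδ, hsh⟩ := hx (dist q x / 2) (half_pos (dist_pos.2 hq))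
  obtain ⟨P, hP, hret⟩ := h.exists_pos_zpow_mem x (closedBall_mem_nhds x hδ)
  obtain ⟨y, hy⟩ := hsh _ (isPseudoOrbit_zpow_emod f hδ.le hP hret) (by simp)
  have horbit : range (fun k : ℤ => hpow (f ^ P) k y) ⊆ closedBall x (dist q x / 2) := by
    rintro _ ⟨k, rfl⟩
    simpa [hpow_eq_zpow, zpow_mul] using hy (P * k)
  have hqx : dist q x ≤ dist q x / 2 :=
    closure_minimal horbit isClosed_closedBall ((h.zpow hP.ne' y).closure_eq ▸ mem_univ q)
  linarith [dist_pos.2 hq]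
end

section
/- Every compact metric space admitting a distal homeomorphism with the pseudo-orbit tracing property is totally disconnected. -/
open Metric Set

variable {X : Type*} [MetricSpace X]

/-! ### Auxiliary lemmas about `hpow` -/

section HpowLemmas

variable {Y : Type*} [TopologicalSpace Y]

theorem hpow_zero' (f : Y ≃ₜ Y) (x : Y) : hpow f 0 x = x := rfl

theorem hpow_succ' (f : Y ≃ₜ Y) (n : ℤ) (x : Y) : hpow f (n + 1) x = f (hpow f n x) := by
  cases n with
  | ofNat k =>
    have h : Int.ofNat k + 1 = Int.ofNat (k + 1) := rfl
    rw [h]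
    rfl
  | negSucc k =>
    cases k with
    | zero =>
      have h : Int.negSucc 0 + 1 = Int.ofNat 0 := rfl
      rw [h]
      show x = f (f.symm x)
      rw [Homeomorph.apply_symm_apply]
    | succ k =>
      have h : Int.negSucc (k + 1) + 1 = Int.negSucc k := rfl
      rw [h]
      show hnpow f.symm (k + 1) x = f (f.symm (hnpow f.symm (k + 1) x))
      rw [Homeomorph.apply_symm_apply]

theorem hpow_pred' (f : Y ≃ₜ Y) (n : ℤ) (x : Y) : hpow f (n - 1) x = f.symm (hpow f n x) := by
  have h := hpow_succ' f (n - 1) x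
  rw [sub_add_cancel] at h
  rw [h, Homeomorph.symm_apply_apply]

theorem hpow_add' (f : Y ≃ₜ Y) (n m : ℤ) (x : Y) :
    hpow f (n + m) x = hpow f n (hpow f m x) := by
  induction n using Int.induction_on with
  | zero => rw [zero_add]; rfl
  | succ k ih =>
    have e : (k : ℤ) + 1 + m = (k + m) + 1 := by ring
    rw [e, hpow_succ', ih, ← hpow_succ']
  | pred k ih =>
    have e : (-(k : ℤ) - 1) + m = (-(k : ℤ) + m) - 1 := by ring
    rw [e, hpow_pred', ih, ← hpow_pred']

theorem hpow_symm' (f : Y ≃ₜ Y) (n : ℤ) (x : Y) : hpow f.symm n x = hpow f (-n) x := by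
  induction n using Int.induction_on with
  | zero => rfl
  | succ k ih =>
    rw [hpow_succ', ih]
    have e : -((k : ℤ) + 1) = -(k : ℤ) - 1 := by ring
    rw [e, hpow_pred']
  | pred k ih =>
    have h1 : hpow f.symm (-(k : ℤ) - 1) x = f.symm.symm (hpow f.symm (-(k : ℤ)) x) :=
      hpow_pred' f.symm (-(k : ℤ)) x
    rw [h1, Homeomorph.symm_symm, ih]
    have h2 : -(-(k : ℤ) - 1) = -(-(k : ℤ)) + 1 := by ring
    rw [h2, hpow_succ']

end HpowLemmas

/-! ### Uniform continuity helper -/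

theorem unifcont_of_compact [CompactSpace X] (f : X ≃ₜ X) {δ : ℝ} (hδ : 0 < δ) :
    ∃ β > 0, ∀ a b : X, dist a b ≤ β → dist (f a) (f b) ≤ δ := by
  have h := CompactSpace.uniformContinuous_of_continuous f.continuous
  rw [Metric.uniformContinuous_iff] at h
  obtain ⟨β, hβ, hb⟩ := h δ hδ
  refine ⟨β / 2, by positivity, fun a b hab => ?_⟩
  exact (hb (lt_of_le_of_lt hab (by linarith))).le

/-! ### Backward recurrence from distality (Ellis–Numakura) -/

theorem distal_backward_rec [CompactSpace X] (f : X ≃ₜ X) (h1 : Distal f) (a b : X)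
    {θ : ℝ} (hθ : 0 < θ) (N : ℤ) :
    ∃ n : ℤ, n < N ∧ dist (hpow f n a) a ≤ θ ∧ dist (hpow f n b) b ≤ θ := by
  classical
  set M : ℤ := min N 0 with hM
  have hM0 : M ≤ 0 := min_le_right _ _
  letI : Semigroup (X → X) := { mul := fun g h => g ∘ h, mul_assoc := fun _ _ _ => rfl }
  set Sr : Set (X → X) := {g | ∃ n : ℤ, n < M ∧ g = ⇑(hpow f n)} with hSr
  have hmulmem : ∀ g ∈ Sr, ∀ h ∈ Sr, g * h ∈ Sr := by
    rintro g ⟨n1, hn1, rfl⟩ h ⟨n2, hn2, rfl⟩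
    exact ⟨n1 + n2, by omega, funext fun x => (hpow_add' f n1 n2 x).symm⟩
  have hrho : ∀ r : X → X, Continuous fun g : X → X => g * r := fun r =>
    continuous_pi fun x => continuous_apply (r x)
  have hmulcl : ∀ u ∈ closure Sr, ∀ v ∈ closure Sr, u * v ∈ closure Sr := by
    have step1 : ∀ g ∈ Sr, ∀ v ∈ closure Sr, g * v ∈ closure Sr := by
      rintro g hg v hv
      obtain ⟨n1, hn1, rfl⟩ := hg
      have hc : Continuous fun h : X → X => (⇑(hpow f n1) : X → X) * h :=
        continuous_pi fun x => (hpow f n1).continuous.comp (continuous_apply x)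
      have hmem : (fun h : X → X => (⇑(hpow f n1) : X → X) * h) v ∈
          closure ((fun h : X → X => (⇑(hpow f n1) : X → X) * h) '' Sr) :=
        image_closure_subset_closure_image hc ⟨v, hv, rfl⟩
      refine closure_mono ?_ hmem
      rintro _ ⟨h, hh, rfl⟩
      exact hmulmem _ ⟨n1, hn1, rfl⟩ _ hh
    intro u hu v hv
    have hmem : (fun g : X → X => g * v) u ∈ closure ((fun g : X → X => g * v) '' Sr) :=
      image_closure_subset_closure_image (hrho v) ⟨u, hu, rfl⟩
    have h2 : closure ((fun g : X → X => g * v) '' Sr) ⊆ closure Sr := by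
      rw [show closure Sr = closure (closure Sr) from (closure_closure).symm]
      refine closure_mono ?_
      rintro _ ⟨g, hg, rfl⟩
      exact step1 g hg v hv
    exact h2 hmem
  have hne : (closure Sr).Nonempty :=
    ⟨⇑(hpow f (M - 1)), subset_closure ⟨M - 1, by omega, rfl⟩⟩
  have hcpt : IsCompact (closure Sr) := isClosed_closure.isCompact
  obtain ⟨u, hus, huu⟩ :=
    exists_idempotent_in_compact_subsemigroup hrho (closure Sr) hne hcpt hmulcl
  have hid : ∀ z : X, u z = z := by
    intro z
    by_contra hne'
    obtain ⟨c, hc, hcd⟩ := h1 z (u z) fun h => hne' h.symm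
    have huz : u (u z) = u z := congrFun huu z
    have hWopen : IsOpen {g : X → X | dist (g z) (u z) < c / 2 ∧ dist (g (u z)) (u z) < c / 2} := by
      have o1 : IsOpen ((fun g : X → X => g z) ⁻¹' ball (u z) (c / 2)) :=
        isOpen_ball.preimage (continuous_apply z)
      have o2 : IsOpen ((fun g : X → X => g (u z)) ⁻¹' ball (u z) (c / 2)) :=
        isOpen_ball.preimage (continuous_apply (u z))
      exact o1.inter o2
    have humem : u ∈ {g : X → X | dist (g z) (u z) < c / 2 ∧ dist (g (u z)) (u z) < c / 2} := by
      constructor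
      · rw [dist_self]; positivity
      · rw [huz, dist_self]; positivity
    obtain ⟨g, hgW, hgS⟩ := _root_.mem_closure_iff.mp hus _ hWopen humem
    obtain ⟨n, hnM, rfl⟩ := hgS
    have hlt : dist (hpow f n z) (hpow f n (u z)) < c := by
      calc dist (hpow f n z) (hpow f n (u z))
          ≤ dist (hpow f n z) (u z) + dist (hpow f n (u z)) (u z) := dist_triangle_right _ _ _
        _ < c / 2 + c / 2 := add_lt_add hgW.1 hgW.2
        _ = c := by ring
    exact absurd (hcd n) (not_le.mpr hlt)
  have hWopen2 : IsOpen {g : X → X | dist (g a) a < θ ∧ dist (g b) b < θ} := by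
    have o1 : IsOpen ((fun g : X → X => g a) ⁻¹' ball a θ) :=
      isOpen_ball.preimage (continuous_apply a)
    have o2 : IsOpen ((fun g : X → X => g b) ⁻¹' ball b θ) :=
      isOpen_ball.preimage (continuous_apply b)
    exact o1.inter o2
  have humem2 : u ∈ {g : X → X | dist (g a) a < θ ∧ dist (g b) b < θ} := by
    constructor
    · rw [hid a, dist_self]; exact hθ
    · rw [hid b, dist_self]; exact hθ
  obtain ⟨g, hgW, hgS⟩ := _root_.mem_closure_iff.mp hus _ hWopen2 humem2
  obtain ⟨n, hnM, rfl⟩ := hgS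
  exact ⟨n, lt_of_lt_of_le hnM (min_le_left _ _), hgW.1.le, hgW.2.le⟩

/-! ### Symmetry lemmas -/

theorem distal_symm (f : X ≃ₜ X) (h1 : Distal f) : Distal f.symm := by
  intro x y hxy
  obtain ⟨c, hc, hcd⟩ := h1 x y hxy
  refine ⟨c, hc, fun n => ?_⟩
  rw [hpow_symm' f n x, hpow_symm' f n y]
  exact hcd (-n)

theorem potp_symm [CompactSpace X] (f : X ≃ₜ X) (h2 : POTP f) : POTP f.symm := by
  intro ε hε
  obtain ⟨δ1, hδ1, H⟩ := h2 ε hε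
  obtain ⟨β, hβ, hf⟩ := unifcont_of_compact f hδ1
  refine ⟨β, hβ, fun ξ hξ => ?_⟩
  have hη : IsPseudoOrbit f δ1 fun n => ξ (-n) := by
    intro n
    have h := hξ (-n - 1)
    have e : (-n - 1) + 1 = -n := by ring
    rw [e] at h
    have h2' := hf _ _ h
    rw [Homeomorph.apply_symm_apply] at h2'
    have e2 : -(n + 1) = -n - 1 := by ring
    simp only [e2]
    rw [dist_comm]
    exact h2'
  obtain ⟨y, hy⟩ := H _ hη
  refine ⟨y, fun n => ?_⟩
  have h := hy (-n)
  simp only [neg_neg] at h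
  rw [hpow_symm' f n y]
  exact h

/-! ### Forward equicontinuity from distality and POTP -/

theorem potp_equi_forward [CompactSpace X] (f : X ≃ₜ X) (h1 : Distal f) (h2 : POTP f)
    {α : ℝ} (hα : 0 < α) :
    ∃ β > 0, ∀ x y : X, dist x y ≤ β → ∀ n : ℤ, 0 ≤ n →
      dist (hpow f n x) (hpow f n y) ≤ α := by
  by_contra hcon
  push_neg at hcon
  set ε := α / 6 with hεdef
  have hε : 0 < ε := by positivity
  obtain ⟨δ0, hδ0, Hsh⟩ := h2 ε hε
  obtain ⟨β, hβ, hf⟩ := unifcont_of_compact f hδ0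
  obtain ⟨x, y, hxy, N, hN0, hNd⟩ := hcon (min β α) (lt_min hβ hα)
  have hxyβ : dist x y ≤ β := hxy.trans (min_le_left _ _)
  have hNne : N ≠ 0 := by
    rintro rfl
    rw [hpow_zero', hpow_zero'] at hNd
    have h := hxy.trans (min_le_right _ _)
    linarith
  have hN1 : 1 ≤ N := by omega
  have hpo : IsPseudoOrbit f δ0 fun n => if n ≤ 0 then hpow f n x else hpow f n y := by
    intro n
    rcases lt_trichotomy n 0 with hn | hn | hn
    · simp only [if_pos hn.le, if_pos (by omega : n + 1 ≤ 0)]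
      rw [← hpow_succ' f n x, dist_self]
      exact hδ0.le
    · subst hn
      simp only [if_pos le_rfl, if_neg (by omega : ¬ (0 : ℤ) + 1 ≤ 0)]
      have e : hpow f ((0 : ℤ) + 1) y = f y := by
        rw [hpow_succ' f 0 y, hpow_zero']
      rw [e, hpow_zero']
      exact hf x y hxyβ
    · simp only [if_neg (by omega : ¬ n ≤ 0), if_neg (by omega : ¬ n + 1 ≤ 0)]
      rw [← hpow_succ' f n y, dist_self]
      exact hδ0.le
  obtain ⟨w, hw⟩ := Hsh _ hpo
  have hwpast : ∀ n : ℤ, n ≤ 0 → dist (hpow f n w) (hpow f n x) ≤ ε := by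
    intro n hn
    have h := hw n
    simp only [if_pos hn] at h
    exact h
  have hwN : dist (hpow f N w) (hpow f N y) ≤ ε := by
    have h := hw N
    simp only [if_neg (by omega : ¬ N ≤ 0)] at h
    exact h
  obtain ⟨n₀, hn₀N, hra, hrb⟩ :=
    distal_backward_rec f h1 (hpow f N w) (hpow f N x) hε (-N + 1)
  have hsum : n₀ + N ≤ 0 := by omega
  rw [show hpow f n₀ (hpow f N w) = hpow f (n₀ + N) w from (hpow_add' f n₀ N w).symm] at hra
  rw [show hpow f n₀ (hpow f N x) = hpow f (n₀ + N) x from (hpow_add' f n₀ N x).symm] at hrb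
  have hmid : dist (hpow f (n₀ + N) w) (hpow f (n₀ + N) x) ≤ ε := hwpast _ hsum
  have hbig : dist (hpow f N w) (hpow f N x) ≤ 3 * ε := by
    calc dist (hpow f N w) (hpow f N x)
        ≤ dist (hpow f N w) (hpow f (n₀ + N) w) + dist (hpow f (n₀ + N) w) (hpow f (n₀ + N) x)
          + dist (hpow f (n₀ + N) x) (hpow f N x) := dist_triangle4 _ _ _ _
      _ ≤ ε + ε + ε := by
          refine add_le_add (add_le_add ?_ hmid) hrb
          rw [dist_comm]
          exact hra
      _ = 3 * ε := by ring
  have htr := dist_triangle (hpow f N x) (hpow f N w) (hpow f N y)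
  have hcomm : dist (hpow f N x) (hpow f N w) = dist (hpow f N w) (hpow f N x) := dist_comm _ _
  linarith

/-! ### Full equicontinuity -/

theorem potp_equi [CompactSpace X] (f : X ≃ₜ X) (h1 : Distal f) (h2 : POTP f) :
    EquicontinuousHomeo f := by
  intro α hα
  obtain ⟨β₁, hβ₁, H1⟩ := potp_equi_forward f h1 h2 hα
  obtain ⟨β₂, hβ₂, H2⟩ := potp_equi_forward f.symm (distal_symm f h1) (potp_symm f h2) hα
  refine ⟨min β₁ β₂, lt_min hβ₁ hβ₂, fun x y hxy n => ?_⟩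
  rcases le_or_gt 0 n with hn | hn
  · exact H1 x y (hxy.trans (min_le_left _ _)) n hn
  · have h := H2 x y (hxy.trans (min_le_right _ _)) (-n) (by omega)
    rwa [hpow_symm' f (-n) x, hpow_symm' f (-n) y, neg_neg] at h

/-! ### Chains in preconnected sets -/

/-- `v` is reachable from `x` by a spatial `β`-chain. -/
def ChainReach (x : X) (β : ℝ) (v : X) : Prop :=
  ∃ (m : ℕ) (z : ℕ → X), z 0 = x ∧ z m = v ∧ ∀ i < m, dist (z i) (z (i + 1)) ≤ β

theorem chain_connect {S : Set X} (hS : IsPreconnected S) {x y : X} (hx : x ∈ S) (hy : y ∈ S)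
    {β : ℝ} (hβ : 0 < β) : ChainReach x β y := by
  classical
  have hext : ∀ u v : X, ChainReach x β u → dist u v ≤ β → ChainReach x β v := by
    rintro u v ⟨m, z, hz0, hzm, hch⟩ huv
    refine ⟨m + 1, fun i => if i ≤ m then z i else v, ?_, ?_, ?_⟩
    · show (if 0 ≤ m then z 0 else v) = x
      rw [if_pos (Nat.zero_le m)]; exact hz0
    · show (if m + 1 ≤ m then z (m + 1) else v) = v
      rw [if_neg (by omega)]
    · intro i hi
      show dist (if i ≤ m then z i else v) (if i + 1 ≤ m then z (i + 1) else v) ≤ β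
      rcases Nat.lt_or_ge i m with h | h
      · rw [if_pos (by omega : i ≤ m), if_pos (by omega : i + 1 ≤ m)]
        exact hch i h
      · have he : i = m := by omega
        subst he
        rw [if_pos le_rfl, if_neg (by omega), hzm]
        exact huv
  by_contra hPy
  set U : Set X := ⋃ (u : X) (_ : ChainReach x β u), ball u β with hU
  set V : Set X := ⋃ (u : X) (_ : ¬ ChainReach x β u), ball u β with hV
  have hUo : IsOpen U := isOpen_iUnion fun u => isOpen_iUnion fun _ => isOpen_ball
  have hVo : IsOpen V := isOpen_iUnion fun u => isOpen_iUnion fun _ => isOpen_ball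
  have hcov : S ⊆ U ∪ V := by
    intro s _
    by_cases h : ChainReach x β s
    · exact Or.inl (mem_iUnion.mpr ⟨s, mem_iUnion.mpr ⟨h, mem_ball_self hβ⟩⟩)
    · exact Or.inr (mem_iUnion.mpr ⟨s, mem_iUnion.mpr ⟨h, mem_ball_self hβ⟩⟩)
  have hPx : ChainReach x β x :=
    ⟨0, fun _ => x, rfl, rfl, fun i hi => absurd hi (Nat.not_lt_zero i)⟩
  have hxU : (S ∩ U).Nonempty :=
    ⟨x, hx, mem_iUnion.mpr ⟨x, mem_iUnion.mpr ⟨hPx, mem_ball_self hβ⟩⟩⟩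
  have hyV : (S ∩ V).Nonempty :=
    ⟨y, hy, mem_iUnion.mpr ⟨y, mem_iUnion.mpr ⟨hPy, mem_ball_self hβ⟩⟩⟩
  obtain ⟨s, hsS, hsU, hsV⟩ := hS U V hUo hVo hcov hxU hyV
  obtain ⟨u, hu⟩ := mem_iUnion.mp hsU
  obtain ⟨hPu, hsu⟩ := mem_iUnion.mp hu
  obtain ⟨v, hv⟩ := mem_iUnion.mp hsV
  obtain ⟨hPv, hsv⟩ := mem_iUnion.mp hv
  have hPs : ChainReach x β s := by
    refine hext u s hPu ?_
    rw [dist_comm]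
    exact (mem_ball.mp hsu).le
  exact hPv (hext s v hPs (mem_ball.mp hsv).le)

/-! ### Main theorem -/

theorem stmt12 [CompactSpace X] (f : X ≃ₜ X) (h1 : Distal f) (h2 : POTP f) :
    TotallyDisconnectedSpace X := by
  have hequi := potp_equi f h1 h2
  constructor
  intro S _ hS x hx y hy
  by_contra hxy
  obtain ⟨c, hc, hcd⟩ := h1 x y hxy
  obtain ⟨β₁, hβ₁, H1⟩ := hequi (c / 4) (by positivity)
  set ε := min β₁ (c / 4) with hεdef
  have hε : 0 < ε := lt_min hβ₁ (by positivity)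
  obtain ⟨δ, hδ, Hsh⟩ := h2 ε hε
  obtain ⟨β₂, hβ₂, H2⟩ := hequi δ hδ
  obtain ⟨m, z, hz0, hzm, hzch⟩ := chain_connect hS hx hy hβ₂
  have hpo : IsPseudoOrbit f δ fun n : ℤ => hpow f n (z (min n (m : ℤ)).toNat) := by
    intro n
    simp only []
    rw [show f (hpow f n (z (min n (m : ℤ)).toNat)) = hpow f (n + 1) (z (min n (m : ℤ)).toNat)
      from (hpow_succ' f n _).symm]
    refine H2 _ _ ?_ (n + 1)
    rcases le_or_gt (m : ℤ) n with h | h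
    · have e1 : min n (m : ℤ) = (m : ℤ) := min_eq_right h
      have e2 : min (n + 1) (m : ℤ) = (m : ℤ) := min_eq_right (by omega)
      rw [e1, e2, dist_self]
      exact hβ₂.le
    · have e1 : min n (m : ℤ) = n := min_eq_left (by omega)
      have e2 : min (n + 1) (m : ℤ) = n + 1 := min_eq_left (by omega)
      rw [e1, e2]
      rcases le_or_gt n (-1) with h0 | h0
      · rw [show (n + 1).toNat = n.toNat from by omega, dist_self]
        exact hβ₂.le
      · rw [show (n + 1).toNat = n.toNat + 1 from by omega]
        exact hzch n.toNat (by omega)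
  obtain ⟨w, hw⟩ := Hsh _ hpo
  have h0 : dist w x ≤ ε := by
    have h := hw 0
    have e : (min (0 : ℤ) (m : ℤ)).toNat = 0 := by omega
    simp only [e, hz0, hpow_zero'] at h
    exact h
  have hmm : dist (hpow f (m : ℤ) w) (hpow f (m : ℤ) y) ≤ ε := by
    have h := hw (m : ℤ)
    have e : (min (m : ℤ) (m : ℤ)).toNat = m := by omega
    simp only [e, hzm] at h
    exact h
  have hX : dist (hpow f (m : ℤ) w) (hpow f (m : ℤ) x) ≤ c / 4 :=
    H1 w x (h0.trans (min_le_left _ _)) (m : ℤ)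
  have hc2 := hcd (m : ℤ)
  have htr := dist_triangle (hpow f (m : ℤ) x) (hpow f (m : ℤ) w) (hpow f (m : ℤ) y)
  have hcomm : dist (hpow f (m : ℤ) x) (hpow f (m : ℤ) w)
      = dist (hpow f (m : ℤ) w) (hpow f (m : ℤ) x) := dist_comm _ _
  have hεc : ε ≤ c / 4 := min_le_right _ _
  linarith
end

section
/- A distal homeomorphism f of a compact metric space X has the pseudo-orbit tracing property if and only if X is totally disconnected. -/
open Metric Set

variable {X : Type*} [MetricSpace X]

set_option linter.unusedSectionVars false
set_option maxHeartbeats 1000000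

section Infra

variable {X : Type*} [TopologicalSpace X] (f : X ≃ₜ X)

theorem hp_zero (x : X) : hpow f 0 x = x := rfl

theorem hp_one (x : X) : hpow f 1 x = f x := rfl

theorem hp_negone (x : X) : hpow f (-1) x = f.symm x := rfl

theorem hnp_succ (n : ℕ) (x : X) : hnpow f (n+1) x = f (hnpow f n x) := rfl

theorem hp_succ (n : ℤ) (x : X) : hpow f (n+1) x = f (hpow f n x) := by
  cases n with
  | ofNat k =>
    have h : (Int.ofNat k) + 1 = Int.ofNat (k+1) := rfl
    rw [h]
    rfl
  | negSucc k =>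
    cases k with
    | zero =>
      have h : Int.negSucc 0 + 1 = 0 := rfl
      rw [h]
      show x = f (hnpow f.symm 1 x)
      show x = f (f.symm x)
      rw [Homeomorph.apply_symm_apply]
    | succ k =>
      have h : Int.negSucc (k+1) + 1 = Int.negSucc k := by
        rw [Int.negSucc_eq, Int.negSucc_eq]; push_cast; ring
      rw [h]
      show hnpow f.symm (k+1) x = f (hnpow f.symm (k+2) x)
      show hnpow f.symm (k+1) x = f (f.symm (hnpow f.symm (k+1) x))
      rw [Homeomorph.apply_symm_apply]

theorem hp_pred (n : ℤ) (x : X) : hpow f (n-1) x = f.symm (hpow f n x) := by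
  have h := hp_succ f (n-1) x
  rw [sub_add_cancel] at h
  rw [h, Homeomorph.symm_apply_apply]

theorem hp_add (m n : ℤ) (x : X) : hpow f (m + n) x = hpow f m (hpow f n x) := by
  induction m using Int.induction_on with
  | zero => rw [zero_add]; rfl
  | succ k ih =>
    have h : (k:ℤ) + 1 + n = (k + n) + 1 := by ring
    rw [h, hp_succ, hp_succ, ih]
  | pred k ih =>
    have h : (-(k:ℤ) - 1) + n = (-k + n) - 1 := by ring
    rw [h, hp_pred, hp_pred, ih]

theorem hp_symmpow (n : ℤ) (x : X) : hpow f.symm n x = hpow f (-n) x := by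
  induction n using Int.induction_on with
  | zero => rfl
  | succ k ih =>
    rw [hp_succ, ih]
    have h : -((k:ℤ)+1) = (-k) - 1 := by ring
    rw [h, hp_pred]
  | pred k ih =>
    have h2 := hp_pred f.symm (-k) x
    rw [ih] at h2
    rw [h2, Homeomorph.symm_symm]
    have h3 : -(-(k:ℤ) - 1) = (-(-(k:ℤ))) + 1 := by ring
    rw [h3, hp_succ, neg_neg]

theorem hp_apply_f (n : ℤ) (x : X) : hpow f n (f x) = hpow f (n+1) x := by
  rw [← hp_one f x, ← hp_add]

theorem hp_apply_fsymm (n : ℤ) (x : X) : hpow f n (f.symm x) = hpow f (n-1) x := by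
  rw [← hp_negone f x, ← hp_add, ← sub_eq_add_neg]

theorem hp_prod (n : ℤ) (p : X × X) :
    hpow (f.prodCongr f) n p = (hpow f n p.1, hpow f n p.2) := by
  induction n using Int.induction_on with
  | zero => rfl
  | succ k ih => rw [hp_succ, hp_succ, hp_succ, ih]; rfl
  | pred k ih =>
    have h : (-(k:ℤ) - 1) = (-k) - 1 := by ring
    rw [h, hp_pred, hp_pred, hp_pred, ih]
    rfl

end Infra

section Ellis

variable {Y : Type*} [MetricSpace Y] [CompactSpace Y] (g : Y ≃ₜ Y)

/-- The Ellis semigroup: closure of the integer iterates in `Y → Y` (pointwise topology). -/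
def ES : Set (Y → Y) := closure (Set.range fun n : ℤ => ⇑(hpow g n))

theorem es_closed : IsClosed (ES g) := isClosed_closure

theorem es_compact : IsCompact (ES g) := (es_closed g).isCompact

theorem sigma_mem_es (n : ℤ) : ⇑(hpow g n) ∈ ES g := subset_closure (Set.mem_range_self n)

theorem id_mem_es : (id : Y → Y) ∈ ES g := by
  have : (id : Y → Y) = ⇑(hpow g 0) := by funext x; rfl
  rw [this]; exact sigma_mem_es g 0

theorem cont_comp_right (r : Y → Y) : Continuous fun p : Y → Y => p ∘ r :=
  continuous_pi fun a => continuous_apply (r a)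

theorem cont_comp_left (n : ℤ) : Continuous fun p : Y → Y => ⇑(hpow g n) ∘ p :=
  continuous_pi fun a => (hpow g n).continuous.comp (continuous_apply a)

theorem es_comp_sigma (n : ℤ) {q : Y → Y} (hq : q ∈ ES g) : ⇑(hpow g n) ∘ q ∈ ES g := by
  have himg : (fun p : Y → Y => ⇑(hpow g n) ∘ p) '' (Set.range fun m : ℤ => ⇑(hpow g m))
      ⊆ Set.range fun m : ℤ => ⇑(hpow g m) := by
    rintro - ⟨-, ⟨m, rfl⟩, rfl⟩
    refine ⟨n + m, ?_⟩
    funext x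
    show hpow g (n + m) x = hpow g n (hpow g m x)
    exact hp_add g n m x
  have h1 : (fun p : Y → Y => ⇑(hpow g n) ∘ p) q ∈
      closure ((fun p : Y → Y => ⇑(hpow g n) ∘ p) '' (Set.range fun m : ℤ => ⇑(hpow g m))) :=
    (image_closure_subset_closure_image (cont_comp_left g n)) ⟨q, hq, rfl⟩
  exact closure_mono himg h1

theorem es_comp {p q : Y → Y} (hp : p ∈ ES g) (hq : q ∈ ES g) : p ∘ q ∈ ES g := by
  have himg : (fun r : Y → Y => r ∘ q) '' (Set.range fun m : ℤ => ⇑(hpow g m)) ⊆ ES g := by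
    rintro - ⟨-, ⟨m, rfl⟩, rfl⟩
    exact es_comp_sigma g m hq
  have h1 : (fun r : Y → Y => r ∘ q) p ∈
      closure ((fun r : Y → Y => r ∘ q) '' (Set.range fun m : ℤ => ⇑(hpow g m))) :=
    (image_closure_subset_closure_image (cont_comp_right q)) ⟨p, hp, rfl⟩
  have := closure_mono himg h1
  rwa [(es_closed g).closure_eq] at this

theorem es_idem_id (hD : Distal g) {u : Y → Y} (hu : u ∈ ES g) (hid : u ∘ u = u) :
    u = id := by
  funext x
  show u x = x
  by_contra hne
  obtain ⟨c, hc, hcl⟩ := hD (u x) x (fun h => hne h)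
  have hux : u (u x) = u x := congrFun hid x
  set V : Set (Y → Y) := {r | dist (r x) (u x) < c/2 ∧ dist (r (u x)) (u x) < c/2} with hV
  have hVopen : IsOpen V := by
    apply IsOpen.inter
    · exact isOpen_lt (Continuous.dist (continuous_apply x) continuous_const) continuous_const
    · exact isOpen_lt (Continuous.dist (continuous_apply (u x)) continuous_const) continuous_const
  have hVu : u ∈ V := by
    constructor
    · simpa using half_pos hc
    · simp only [hV, Set.mem_setOf_eq, hux]
      simpa using half_pos hc
  obtain ⟨r, hrV, hrR⟩ := mem_closure_iff.mp hu V hVopen hVu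
  obtain ⟨n, rfl⟩ := hrR
  have h1 : dist (hpow g n (u x)) (hpow g n x) < c := by
    calc dist (hpow g n (u x)) (hpow g n x)
        ≤ dist (hpow g n (u x)) (u x) + dist (u x) (hpow g n x) := dist_triangle _ _ _
      _ < c/2 + c/2 := by
          rw [dist_comm (u x) (hpow g n x)]
          exact add_lt_add hrV.2 hrV.1
      _ = c := by ring
  exact absurd (hcl n) (not_le.mpr h1)

theorem es_inv_left (hD : Distal g) {p : Y → Y} (hp : p ∈ ES g) :
    ∃ q ∈ ES g, q ∘ p = id := by
  classical
  letI sg : Semigroup (Y → Y) := { mul := fun a b => a ∘ b, mul_assoc := fun _ _ _ => rfl }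
  have hcont : ∀ r : Y → Y, Continuous (· * r) := fun r => cont_comp_right r
  set s : Set (Y → Y) := (fun r => r ∘ p) '' ES g with hs
  have hsne : s.Nonempty := ⟨p, id, id_mem_es g, rfl⟩
  have hscomp : IsCompact s := (es_compact g).image (cont_comp_right p)
  have hsadd : ∀ x ∈ s, ∀ y ∈ s, x * y ∈ s := by
    rintro - ⟨a, ha, rfl⟩ - ⟨b, hb, rfl⟩
    exact ⟨a ∘ (p ∘ b), es_comp g ha (es_comp g hp hb), rfl⟩
  obtain ⟨m, hms, hmm⟩ := exists_idempotent_in_compact_subsemigroup hcont s hsne hscomp hsadd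
  obtain ⟨q, hq, rfl⟩ := hms
  have hmes : q ∘ p ∈ ES g := es_comp g hq hp
  have := es_idem_id g hD hmes hmm
  exact ⟨q, hq, this⟩

theorem es_inv (hD : Distal g) {p : Y → Y} (hp : p ∈ ES g) :
    ∃ q ∈ ES g, q ∘ p = id ∧ p ∘ q = id := by
  obtain ⟨q, hq, hqp⟩ := es_inv_left g hD hp
  obtain ⟨r, hr, hrq⟩ := es_inv_left g hD hq
  have hrp : r = p := by
    funext x
    have h1 : q (p x) = x := congrFun hqp x
    have h2 : r (q (p x)) = r x := by rw [h1]
    have h3 : r (q (p x)) = p x := congrFun hrq (p x)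
    rw [← h2, h3]
  refine ⟨q, hq, hqp, ?_⟩
  rw [← hrp]; exact hrq

theorem es_apply_mem_closure {p : Y → Y} (hp : p ∈ ES g) (P : Y) :
    p P ∈ closure (Set.range fun n : ℤ => hpow g n P) := by
  have h1 : (fun r : Y → Y => r P) p ∈
      closure ((fun r : Y → Y => r P) '' (Set.range fun n : ℤ => ⇑(hpow g n))) :=
    (image_closure_subset_closure_image (continuous_apply P)) ⟨p, hp, rfl⟩
  refine closure_mono ?_ h1
  rintro - ⟨-, ⟨n, rfl⟩, rfl⟩
  exact ⟨n, rfl⟩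

theorem orbit_symm (hD : Distal g) {P Q : Y}
    (hQ : Q ∈ closure (Set.range fun n : ℤ => hpow g n P)) :
    P ∈ closure (Set.range fun n : ℤ => hpow g n Q) := by
  classical
  set T : ℕ → Set (Y → Y) := fun m =>
    closure {r : Y → Y | ∃ n : ℤ, r = ⇑(hpow g n) ∧ dist (hpow g n P) Q ≤ 1/(m+1)} with hT
  have hnest : ∀ m, T (m+1) ⊆ T m := by
    intro m
    apply closure_mono
    rintro r ⟨n, rfl, hd⟩
    refine ⟨n, rfl, hd.trans ?_⟩
    apply one_div_le_one_div_of_le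
    · positivity
    · push_cast; linarith
  have hne : ∀ m, (T m).Nonempty := by
    intro m
    have hpos : (0:ℝ) < 1/(m+1) := by positivity
    obtain ⟨b, ⟨n, rfl⟩, hb⟩ := Metric.mem_closure_iff.mp hQ _ hpos
    exact ⟨⇑(hpow g n), subset_closure ⟨n, rfl, by rw [dist_comm] at hb; exact hb.le⟩⟩
  have hcl : ∀ m, IsClosed (T m) := fun m => isClosed_closure
  obtain ⟨p, hp⟩ := IsCompact.nonempty_iInter_of_sequence_nonempty_isCompact_isClosed
    T hnest hne (hcl 0).isCompact hcl
  have hpmem : ∀ m : ℕ, p ∈ T m := by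
    intro m; exact Set.mem_iInter.mp hp m
  have hpE : p ∈ ES g := by
    have : T 0 ⊆ ES g := by
      apply closure_mono
      rintro r ⟨n, rfl, -⟩
      exact ⟨n, rfl⟩
    exact this (hpmem 0)
  have hdist : ∀ m : ℕ, dist (p P) Q ≤ 1/(m+1) := by
    intro m
    have hC : IsClosed {r : Y → Y | dist (r P) Q ≤ 1/(m+1)} :=
      isClosed_le (Continuous.dist (continuous_apply P) continuous_const) continuous_const
    have hsub : {r : Y → Y | ∃ n : ℤ, r = ⇑(hpow g n) ∧ dist (hpow g n P) Q ≤ 1/(m+1)}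
        ⊆ {r : Y → Y | dist (r P) Q ≤ 1/(m+1)} := by
      rintro r ⟨n, rfl, hd⟩; exact hd
    have := closure_minimal hsub hC
    exact this (hpmem m)
  have hPQ : p P = Q := by
    apply eq_of_dist_eq_zero
    by_contra hne
    have hpos : 0 < dist (p P) Q := lt_of_le_of_ne dist_nonneg (Ne.symm hne)
    obtain ⟨m, hm⟩ := exists_nat_one_div_lt hpos
    exact absurd (hdist m) (not_le.mpr hm)
  obtain ⟨q, hqE, hqp, -⟩ := es_inv g hD hpE
  have : q Q = P := by rw [← hPQ]; exact congrFun hqp P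
  rw [← this]
  exact es_apply_mem_closure g hqE Q

end Ellis

section Dyn

variable {Y : Type*} [MetricSpace Y] [CompactSpace Y] (g : Y ≃ₜ Y)

theorem distal_symm_s15 (hD : Distal g) : Distal g.symm := by
  intro x y hxy
  obtain ⟨c, hc, hcl⟩ := hD x y hxy
  refine ⟨c, hc, fun n => ?_⟩
  rw [hp_symmpow, hp_symmpow]
  exact hcl (-n)

theorem omega_self (hD : Distal g) (P : Y) (K : ℕ) :
    P ∈ closure {y : Y | ∃ n : ℤ, (K:ℤ) ≤ n ∧ y = hpow g n P} := by
  set tail : ℕ → Set Y := fun k => {y : Y | ∃ n : ℤ, (k:ℤ) ≤ n ∧ y = hpow g n P} with htail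
  set T : ℕ → Set Y := fun k => closure (tail k) with hT
  have hnest : ∀ k, T (k+1) ⊆ T k := by
    intro k
    apply closure_mono
    rintro y ⟨n, hn, rfl⟩
    exact ⟨n, by push_cast at hn ⊢; linarith, rfl⟩
  have hne : ∀ k, (T k).Nonempty := fun k => ⟨hpow g k P, subset_closure ⟨k, le_refl _, rfl⟩⟩
  have hcl : ∀ k, IsClosed (T k) := fun k => isClosed_closure
  obtain ⟨Q, hQ⟩ := IsCompact.nonempty_iInter_of_sequence_nonempty_isCompact_isClosed
    T hnest hne (hcl 0).isCompact hcl
  have hQmem : ∀ k : ℕ, Q ∈ T k := fun k => Set.mem_iInter.mp hQ k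
  -- invariance of A = ⋂ T
  have hinv : ∀ (m : ℤ) (R : Y), (∀ k : ℕ, R ∈ T k) → ∀ k : ℕ, hpow g m R ∈ T k := by
    intro m R hR k
    have h1 : hpow g m '' T (k + m.natAbs) ⊆ T k := by
      have h2 : hpow g m '' tail (k + m.natAbs) ⊆ tail k := by
        rintro - ⟨-, ⟨n, hn, rfl⟩, rfl⟩
        refine ⟨m + n, by omega, (hp_add g m n P).symm⟩
      calc hpow g m '' closure (tail (k + m.natAbs))
          ⊆ closure (hpow g m '' tail (k + m.natAbs)) :=
            image_closure_subset_closure_image (hpow g m).continuous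
        _ ⊆ closure (tail k) := closure_mono h2
    exact h1 ⟨R, hR _, rfl⟩
  have hQorb : Q ∈ closure (Set.range fun n : ℤ => hpow g n P) := by
    refine closure_mono ?_ (hQmem 0)
    rintro - ⟨n, -, rfl⟩
    exact ⟨n, rfl⟩
  have hPQ : P ∈ closure (Set.range fun n : ℤ => hpow g n Q) := orbit_symm g hD hQorb
  have horbQ : (Set.range fun n : ℤ => hpow g n Q) ⊆ ⋂ k : ℕ, T k := by
    rintro - ⟨m, rfl⟩
    exact Set.mem_iInter.mpr (hinv m Q hQmem)
  have hclosed : IsClosed (⋂ k : ℕ, T k) := isClosed_iInter hcl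
  have : P ∈ ⋂ k : ℕ, T k := (closure_minimal horbQ hclosed) hPQ
  exact Set.mem_iInter.mp this K

theorem tail_forward (hD : Distal g) {S : Set Y} (hS : IsClosed S) {P : Y} {N : ℤ}
    (h : ∀ n : ℤ, N ≤ n → hpow g n P ∈ S) : ∀ m : ℤ, hpow g m P ∈ S := by
  intro m
  have hself := omega_self g hD (hpow g m P) (N - m).toNat
  have hsub : {y : Y | ∃ n : ℤ, ((N - m).toNat:ℤ) ≤ n ∧ y = hpow g n (hpow g m P)} ⊆ S := by
    rintro - ⟨n, hn, rfl⟩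
    rw [← hp_add]
    apply h
    omega
  exact (closure_minimal hsub hS) hself

theorem tail_backward (hD : Distal g) {S : Set Y} (hS : IsClosed S) {P : Y} {N : ℤ}
    (h : ∀ n : ℤ, n ≤ N → hpow g n P ∈ S) : ∀ m : ℤ, hpow g m P ∈ S := by
  intro m
  have h2 : ∀ n : ℤ, -N ≤ n → hpow g.symm n P ∈ S := by
    intro n hn
    rw [hp_symmpow]
    exact h (-n) (by omega)
  have := tail_forward g.symm (distal_symm_s15 g hD) hS h2 (-m)
  rwa [hp_symmpow, neg_neg] at this

theorem recur (hD : Distal g) {P : Y} {V : Set Y} (hV : IsOpen V) {k : ℤ}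
    (hk : hpow g k P ∈ V) (T : ℤ) : ∃ n : ℤ, T ≤ n ∧ hpow g n P ∈ V := by
  have hself := omega_self g hD (hpow g k P) (T - k).toNat
  obtain ⟨y, hyV, n, hn, rfl⟩ := mem_closure_iff.mp hself V hV hk
  exact ⟨n + k, by omega, by rw [hp_add]; exact hyV⟩

end Dyn

section Prodd

variable {X : Type*} [MetricSpace X] (f : X ≃ₜ X)

theorem distal_prod (hD : Distal f) : Distal (f.prodCongr f) := by
  intro p q hpq
  have : p.1 ≠ q.1 ∨ p.2 ≠ q.2 := by
    by_contra hc
    push_neg at hc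
    exact hpq (Prod.ext hc.1 hc.2)
  rcases this with h1 | h2
  · obtain ⟨c, hc, hcl⟩ := hD p.1 q.1 h1
    refine ⟨c, hc, fun n => ?_⟩
    rw [hp_prod, hp_prod, Prod.dist_eq]
    exact le_trans (hcl n) (le_max_left _ _)
  · obtain ⟨c, hc, hcl⟩ := hD p.2 q.2 h2
    refine ⟨c, hc, fun n => ?_⟩
    rw [hp_prod, hp_prod, Prod.dist_eq]
    exact le_trans (hcl n) (le_max_right _ _)

end Prodd

section Fwd

variable {X : Type*} [MetricSpace X] (f : X ≃ₜ X)

/-- Orbit-closeness relation at scale `γ`. -/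
def ORel (γ : ℝ) (u v : X) : Prop := ∃ n : ℤ, dist (hpow f n u) (hpow f n v) < γ

theorem orel_symm {γ : ℝ} {u v : X} (h : ORel f γ u v) : ORel f γ v u := by
  obtain ⟨n, hn⟩ := h; exact ⟨n, by rwa [dist_comm]⟩

theorem orel_of_dist {γ : ℝ} {u v : X} (h : dist u v < γ) : ORel f γ u v :=
  ⟨0, by rwa [hp_zero, hp_zero]⟩

theorem orel_mono {γ γ' : ℝ} (hγ : γ ≤ γ') {u v : X} (h : ORel f γ u v) : ORel f γ' u v := by
  obtain ⟨n, hn⟩ := h; exact ⟨n, lt_of_lt_of_le hn hγ⟩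

theorem orel_map_f {γ : ℝ} {u v : X} (h : ORel f γ u v) : ORel f γ (f u) (f v) := by
  obtain ⟨n, hn⟩ := h
  exact ⟨n - 1, by rw [hp_apply_f, hp_apply_f, sub_add_cancel]; exact hn⟩

theorem orel_map_fsymm {γ : ℝ} {u v : X} (h : ORel f γ u v) :
    ORel f γ (f.symm u) (f.symm v) := by
  obtain ⟨n, hn⟩ := h
  exact ⟨n + 1, by rw [hp_apply_fsymm, hp_apply_fsymm, add_sub_cancel_right]; exact hn⟩

theorem rtg_map_f {γ : ℝ} {u v : X} (h : Relation.ReflTransGen (ORel f γ) u v) :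
    Relation.ReflTransGen (ORel f γ) (f u) (f v) := by
  induction h with
  | refl => exact Relation.ReflTransGen.refl
  | tail _ hbc ih => exact ih.tail (orel_map_f f hbc)

theorem rtg_map_fsymm {γ : ℝ} {u v : X} (h : Relation.ReflTransGen (ORel f γ) u v) :
    Relation.ReflTransGen (ORel f γ) (f.symm u) (f.symm v) := by
  induction h with
  | refl => exact Relation.ReflTransGen.refl
  | tail _ hbc ih => exact ih.tail (orel_map_fsymm f hbc)

variable [CompactSpace X]

/-- Pseudo-orbit construction along an orbit-chain. -/
theorem po_of_rtg (hD : Distal f) {δ : ℝ} (hδ : 0 < δ) {x z : X}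
    (h : Relation.ReflTransGen (ORel f δ) x z) :
    ∃ ξ : ℤ → X, ∃ N : ℤ, IsPseudoOrbit f δ ξ ∧ (∀ n : ℤ, n ≤ 0 → ξ n = hpow f n x) ∧
      1 ≤ N ∧ (∀ n : ℤ, N ≤ n → ξ n = hpow f n z) := by
  induction h with
  | refl =>
    refine ⟨fun n => hpow f n x, 1, ?_, fun n _ => rfl, le_refl _, fun n _ => rfl⟩
    intro n
    rw [← hp_succ]
    simp [le_of_lt hδ]
  | @tail b c hxb hbc ih =>
    obtain ⟨ξ, N, hpo, hneg, hN1, htail⟩ := ih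
    obtain ⟨k, hk⟩ := hbc
    set G := f.prodCongr f with hG
    have hDG : Distal G := distal_prod f hD
    have hVopen : IsOpen {p : X × X | dist p.1 p.2 < δ} :=
      isOpen_lt (continuous_fst.dist continuous_snd) continuous_const
    have hkV : hpow G k (b, c) ∈ {p : X × X | dist p.1 p.2 < δ} := by
      rw [hp_prod]; exact hk
    obtain ⟨n₀, hn₀ge, hn₀V⟩ := recur G hDG hVopen hkV (N + 1)
    rw [hp_prod] at hn₀V
    have hn₀V' : dist (hpow f n₀ b) (hpow f n₀ c) < δ := hn₀V
    set ξ' : ℤ → X := fun n => if n < n₀ then ξ n else hpow f n c with hξ'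
    have hξ'app : ∀ n : ℤ, ξ' n = if n < n₀ then ξ n else hpow f n c := fun n => rfl
    refine ⟨ξ', n₀, ?_, ?_, by omega, ?_⟩
    · intro n
      rcases lt_trichotomy (n + 1) n₀ with hlt | heq | hgt
      · rw [hξ'app, hξ'app, if_pos (by omega), if_pos hlt]
        exact hpo n
      · rw [hξ'app, hξ'app, if_pos (by omega), if_neg (by omega)]
        have hξn : ξ n = hpow f n b := htail n (by omega)
        rw [hξn, ← hp_succ, heq]
        exact le_of_lt hn₀V'
      · rw [hξ'app, hξ'app, if_neg (by omega), if_neg (by omega), ← hp_succ]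
        simp [le_of_lt hδ]
    · intro n hn
      rw [hξ'app, if_pos (by omega)]
      exact hneg n hn
    · intro n hn
      rw [hξ'app, if_neg (by omega)]

theorem claimB_fwd (hD : Distal f) (hP : POTP f) {x y : X}
    (hxy : ∀ γ > (0:ℝ), Relation.ReflTransGen (ORel f γ) x y) : x = y := by
  have key : ∀ ε > (0:ℝ), dist x y ≤ 2 * ε := by
    intro ε hε
    obtain ⟨δ, hδ, hshad⟩ := hP ε hε
    obtain ⟨ξ, N, hpo, hneg, hN1, htail⟩ := po_of_rtg f hD hδ (hxy δ hδ)
    obtain ⟨w, hw⟩ := hshad ξ hpo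
    set G := f.prodCongr f with hG
    have hDG : Distal G := distal_prod f hD
    have hSclosed : IsClosed {p : X × X | dist p.1 p.2 ≤ ε} :=
      isClosed_le (continuous_fst.dist continuous_snd) continuous_const
    have hwx : dist w x ≤ ε := by
      have hback : ∀ n : ℤ, n ≤ 0 → hpow G n (w, x) ∈ {p : X × X | dist p.1 p.2 ≤ ε} := by
        intro n hn
        rw [hp_prod]
        show dist (hpow f n w) (hpow f n x) ≤ ε
        rw [← hneg n hn]
        exact hw n
      have := tail_backward G hDG hSclosed hback 0
      rw [hp_prod] at this
      simpa [hp_zero] using this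
    have hwy : dist w y ≤ ε := by
      have hfwd : ∀ n : ℤ, N ≤ n → hpow G n (w, y) ∈ {p : X × X | dist p.1 p.2 ≤ ε} := by
        intro n hn
        rw [hp_prod]
        show dist (hpow f n w) (hpow f n y) ≤ ε
        rw [← htail n hn]
        exact hw n
      have := tail_forward G hDG hSclosed hfwd 0
      rw [hp_prod] at this
      simpa [hp_zero] using this
    calc dist x y ≤ dist x w + dist w y := dist_triangle _ _ _
      _ ≤ ε + ε := add_le_add (by rwa [dist_comm] at hwx) hwy
      _ = 2 * ε := by ring
  apply eq_of_dist_eq_zero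
  by_contra hne
  have hpos : 0 < dist x y := lt_of_le_of_ne dist_nonneg (Ne.symm hne)
  have := key (dist x y / 4) (by linarith)
  linarith

theorem potp_totdisc (hD : Distal f) (hP : POTP f) : TotallyDisconnectedSpace X := by
  refine ⟨fun t _ hpre => ?_⟩
  intro x hx y hy
  by_contra hne
  have hB : ¬ ∀ γ > (0:ℝ), Relation.ReflTransGen (ORel f γ) x y :=
    fun h => hne (claimB_fwd f hD hP h)
  push_neg at hB
  obtain ⟨γ, hγ, hnR⟩ := hB
  set A : Set X := {z | Relation.ReflTransGen (ORel f γ) x z} with hA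
  have hAopen : IsOpen A := by
    rw [Metric.isOpen_iff]
    intro z hz
    refine ⟨γ, hγ, fun w hw => ?_⟩
    have hd : dist z w < γ := by rw [dist_comm]; exact Metric.mem_ball.mp hw
    exact hz.tail (orel_of_dist f hd)
  have hAcopen : IsOpen Aᶜ := by
    rw [Metric.isOpen_iff]
    intro z hz
    refine ⟨γ, hγ, fun w hw => ?_⟩
    intro hwA
    exact hz (hwA.tail (orel_of_dist f (Metric.mem_ball.mp hw)))
  obtain ⟨p, -, hpA, hpAc⟩ := hpre A Aᶜ hAopen hAcopen
    (by rw [Set.union_compl_self]; exact Set.subset_univ t)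
    ⟨x, hx, Relation.ReflTransGen.refl⟩ ⟨y, hy, hnR⟩
  exact hpAc hpA

end Fwd

section Bwd1

variable {X : Type*} [MetricSpace X] [CompactSpace X] (f : X ≃ₜ X)

/-- Itinerary of a point relative to a clopen set. -/
noncomputable def itin (U : Set X) : X → (ℤ → Bool) := fun z n => U.boolIndicator (hpow f n z)

theorem itin_cont {U : Set X} (hU : IsClopen U) : Continuous (itin f U) :=
  continuous_pi fun n =>
    ((continuous_boolIndicator_iff_isClopen U).mpr hU).comp (hpow f n).continuous

theorem itin_shift (U : Set X) (k : ℤ) (z : X) (i : ℤ) :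
    itin f U (hpow f k z) i = itin f U z (i + k) := by
  show U.boolIndicator (hpow f i (hpow f k z)) = U.boolIndicator (hpow f (i + k) z)
  rw [← hp_add]

theorem itin_cong {U : Set X} (hU : IsClopen U) {v₁ v₂ : X}
    (h : itin f U v₁ = itin f U v₂) {r : X → X} (hr : r ∈ ES f) :
    itin f U (r v₁) = itin f U (r v₂) := by
  funext j
  have hC : IsClosed {p : X → X |
      U.boolIndicator (hpow f j (p v₁)) = U.boolIndicator (hpow f j (p v₂))} :=
    isClosed_eq
      (((continuous_boolIndicator_iff_isClopen U).mpr hU).comp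
        ((hpow f j).continuous.comp (continuous_apply v₁)))
      (((continuous_boolIndicator_iff_isClopen U).mpr hU).comp
        ((hpow f j).continuous.comp (continuous_apply v₂)))
  have hsub : (Set.range fun m : ℤ => ⇑(hpow f m)) ⊆ {p : X → X |
      U.boolIndicator (hpow f j (p v₁)) = U.boolIndicator (hpow f j (p v₂))} := by
    rintro - ⟨m, rfl⟩
    show U.boolIndicator (hpow f j (hpow f m v₁)) = U.boolIndicator (hpow f j (hpow f m v₂))
    rw [← hp_add, ← hp_add]
    exact congrFun h (j + m)
  exact (closure_minimal hsub hC) hr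

theorem itin_sep (hD : Distal f) {U : Set X} (hU : IsClopen U) {z w : X}
    (h : itin f U z ≠ itin f U w) :
    ∃ L : ℕ, ∀ n : ℤ, ∃ j : ℤ, |j| ≤ (L:ℤ) ∧ itin f U z (n+j) ≠ itin f U w (n+j) := by
  by_contra hcon
  push_neg at hcon
  choose ns hns using hcon
  set T : ℕ → Set (X → X) := fun L =>
    closure {r : X → X | ∃ m : ℕ, L ≤ m ∧ r = ⇑(hpow f (ns m))} with hT
  have hnest : ∀ L, T (L+1) ⊆ T L := by
    intro L
    apply closure_mono
    rintro r ⟨m, hm, rfl⟩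
    exact ⟨m, by omega, rfl⟩
  have hne : ∀ L, (T L).Nonempty :=
    fun L => ⟨⇑(hpow f (ns L)), subset_closure ⟨L, le_refl _, rfl⟩⟩
  have hcl : ∀ L, IsClosed (T L) := fun L => isClosed_closure
  obtain ⟨p, hp⟩ := IsCompact.nonempty_iInter_of_sequence_nonempty_isCompact_isClosed
    T hnest hne (hcl 0).isCompact hcl
  have hpmem : ∀ L : ℕ, p ∈ T L := fun L => Set.mem_iInter.mp hp L
  have hpE : p ∈ ES f := by
    have hsub : {r : X → X | ∃ m : ℕ, 0 ≤ m ∧ r = ⇑(hpow f (ns m))} ⊆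
        (Set.range fun n : ℤ => ⇑(hpow f n)) := by
      rintro - ⟨m, -, rfl⟩
      exact ⟨ns m, rfl⟩
    exact (closure_mono hsub) (hpmem 0)
  have hpeq : itin f U (p z) = itin f U (p w) := by
    funext j
    have hC : IsClosed {r : X → X |
        U.boolIndicator (hpow f j (r z)) = U.boolIndicator (hpow f j (r w))} :=
      isClosed_eq
        (((continuous_boolIndicator_iff_isClopen U).mpr hU).comp
          ((hpow f j).continuous.comp (continuous_apply z)))
        (((continuous_boolIndicator_iff_isClopen U).mpr hU).comp
          ((hpow f j).continuous.comp (continuous_apply w)))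
    have hsub : {r : X → X | ∃ m : ℕ, j.natAbs ≤ m ∧ r = ⇑(hpow f (ns m))} ⊆
        {r : X → X |
          U.boolIndicator (hpow f j (r z)) = U.boolIndicator (hpow f j (r w))} := by
      rintro - ⟨m, hm, rfl⟩
      show U.boolIndicator (hpow f j (hpow f (ns m) z))
          = U.boolIndicator (hpow f j (hpow f (ns m) w))
      rw [← hp_add, ← hp_add, add_comm]
      exact hns m j (by rw [Int.abs_eq_natAbs]; exact_mod_cast hm)
    exact (closure_minimal hsub hC) (hpmem j.natAbs)
  obtain ⟨q, hqE, hqp, -⟩ := es_inv f hD hpE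
  have hfin : itin f U (q (p z)) = itin f U (q (p w)) := itin_cong f hU hpeq hqE
  have hz : q (p z) = z := congrFun hqp z
  have hw : q (p w) = w := congrFun hqp w
  rw [hz, hw] at hfin
  exact h hfin

end Bwd1

theorem exists_min_diff {s t : ℤ → Bool} (h : s ≠ t) :
    ∃ m : ℤ, s m ≠ t m ∧ ∀ j : ℤ, |j| < |m| → s j = t j := by
  obtain ⟨j₁, hj₁⟩ := Function.ne_iff.mp h
  set D : Set ℤ := {j | s j ≠ t j ∧ |j| ≤ |j₁|} with hD
  have hDfin : D.Finite := (Set.finite_Icc (-|j₁|) |j₁|).subset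
    (by rintro j ⟨-, hj⟩; exact Set.mem_Icc.mpr (abs_le.mp hj))
  have hDne : j₁ ∈ D := ⟨hj₁, le_refl _⟩
  obtain ⟨m, hmD, hmin⟩ := Set.exists_min_image D (fun j => |j|) hDfin ⟨j₁, hDne⟩
  refine ⟨m, hmD.1, fun j hj => ?_⟩
  by_contra hne
  have hjD : j ∈ D := ⟨hne, le_trans hj.le (hmin j₁ hDne)⟩
  exact absurd (hmin j hjD) (not_le.mpr hj)

section Bwd2

variable {X : Type*} [MetricSpace X] [CompactSpace X] (f : X ≃ₜ X)

theorem range_shift {U : Set X} {s : ℤ → Bool} (hs : s ∈ Set.range (itin f U)) (k : ℤ) :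
    (fun i => s (i + k)) ∈ Set.range (itin f U) := by
  obtain ⟨z, rfl⟩ := hs
  exact ⟨hpow f k z, funext fun i => itin_shift f U k z i⟩

theorem onesided (hD : Distal f) {U : Set X} (hU : IsClopen U) (e : ℤ)
    (he : e = 1 ∨ e = -1)
    (H : ∀ N : ℕ, ∃ a b : ℤ → Bool, a ∈ Set.range (itin f U) ∧ b ∈ Set.range (itin f U) ∧
      a 0 ≠ b 0 ∧ ∀ i : ℤ, 1 ≤ e * i → e * i ≤ (N:ℤ) → a i = b i) : False := by
  choose aa bb haa hbb hne0 hagree using H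
  have hNB : (Filter.map (fun N => (aa N, bb N)) Filter.atTop).NeBot :=
    Filter.map_neBot
  obtain ⟨uv, huv⟩ := exists_clusterPt_of_compactSpace
    (Filter.map (fun N => (aa N, bb N)) Filter.atTop)
  have huv' : MapClusterPt uv Filter.atTop (fun N => (aa N, bb N)) := huv
  have hfreq : ∀ W ∈ nhds uv, ∀ K : ℕ, ∃ N, K ≤ N ∧ (aa N, bb N) ∈ W := by
    intro W hW K
    obtain ⟨N, hN1, hN2⟩ := Filter.frequently_atTop.mp ((mapClusterPt_iff_frequently.mp huv') W hW) K
    exact ⟨N, hN1, hN2⟩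
  have hWio : ∀ i : ℤ, IsOpen {pq : (ℤ → Bool) × (ℤ → Bool) | pq.1 i = uv.1 i ∧ pq.2 i = uv.2 i} := by
    intro i
    have h1 : IsOpen {pq : (ℤ → Bool) × (ℤ → Bool) | pq.1 i = uv.1 i} := by
      have : {pq : (ℤ → Bool) × (ℤ → Bool) | pq.1 i = uv.1 i}
          = (fun pq : (ℤ → Bool) × (ℤ → Bool) => pq.1 i) ⁻¹' {uv.1 i} := rfl
      rw [this]
      exact (isOpen_discrete _).preimage ((continuous_apply i).comp continuous_fst)
    have h2 : IsOpen {pq : (ℤ → Bool) × (ℤ → Bool) | pq.2 i = uv.2 i} := by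
      have : {pq : (ℤ → Bool) × (ℤ → Bool) | pq.2 i = uv.2 i}
          = (fun pq : (ℤ → Bool) × (ℤ → Bool) => pq.2 i) ⁻¹' {uv.2 i} := rfl
      rw [this]
      exact (isOpen_discrete _).preimage ((continuous_apply i).comp continuous_snd)
    exact h1.inter h2
  have hmemW : ∀ i : ℤ, {pq : (ℤ → Bool) × (ℤ → Bool) | pq.1 i = uv.1 i ∧ pq.2 i = uv.2 i}
      ∈ nhds uv := fun i => (hWio i).mem_nhds ⟨rfl, rfl⟩
  -- the two limit points differ at 0
  have hne00 : uv.1 0 ≠ uv.2 0 := by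
    obtain ⟨N, -, hN⟩ := hfreq _ (hmemW 0) 0
    intro hc
    have h1 : aa N 0 = uv.1 0 := hN.1
    have h2 : bb N 0 = uv.2 0 := hN.2
    exact hne0 N (by rw [h1, h2, hc])
  -- they agree on the positive side of e
  have hagree' : ∀ i : ℤ, 1 ≤ e * i → uv.1 i = uv.2 i := by
    intro i hi
    obtain ⟨N, hNge, hN⟩ := hfreq _ (hmemW i) (e * i).toNat
    have : e * i ≤ (N:ℤ) := le_trans (Int.self_le_toNat _) (by exact_mod_cast hNge)
    have ha1 : aa N i = uv.1 i := hN.1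
    have ha2 : bb N i = uv.2 i := hN.2
    rw [← ha1, ← ha2]
    exact hagree N i hi this
  -- limit points lie in the range of the itinerary map
  have hrange : ∀ (pr : ((ℤ → Bool) × (ℤ → Bool)) → (ℤ → Bool)),
      Continuous pr → (∀ N, pr (aa N, bb N) ∈ Set.range (itin f U)) →
      pr uv ∈ Set.range (itin f U) := by
    intro pr hpr hprN
    have hcl : IsClosed (Set.range (itin f U)) := (isCompact_range (itin_cont f hU)).isClosed
    rw [← hcl.closure_eq]
    rw [mem_closure_iff_nhds]
    intro t ht
    obtain ⟨N, -, hN⟩ := hfreq _ ((hpr.tendsto uv) ht) 0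
    exact ⟨pr (aa N, bb N), hN, hprN N⟩
  have hu : uv.1 ∈ Set.range (itin f U) :=
    hrange _ continuous_fst (fun N => haa N)
  have hv : uv.2 ∈ Set.range (itin f U) :=
    hrange _ continuous_snd (fun N => hbb N)
  obtain ⟨zu, hzu⟩ := hu
  obtain ⟨zv, hzv⟩ := hv
  have hneitin : itin f U zu ≠ itin f U zv := by
    intro hc
    apply hne00
    rw [← hzu, ← hzv, hc]
  obtain ⟨L, hL⟩ := itin_sep f hD hU hneitin
  obtain ⟨j, hjL, hjne⟩ := hL (e * (2 * L + 2))
  apply hjne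
  have hee : e * e = 1 := by rcases he with rfl | rfl <;> norm_num
  have hpos : 1 ≤ e * (e * (2 * L + 2) + j) := by
    have h1 : e * (e * (2 * L + 2) + j) = (2 * L + 2) + e * j := by
      rw [mul_add, ← mul_assoc, hee, one_mul]
    rw [h1]
    have habsej : |e * j| ≤ (L:ℤ) := by
      rw [abs_mul]
      rcases he with rfl | rfl <;> simpa using hjL
    have h2 := (abs_le.mp habsej).1
    omega
  have := hagree' _ hpos
  rw [← hzu, ← hzv] at this
  exact this

theorem itin_finite (hD : Distal f) {U : Set X} (hU : IsClopen U) :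
    (Set.range (itin f U)).Finite := by
  by_contra hinf
  have b1 : ∀ N : ℕ, ∃ s t : ℤ → Bool, s ∈ Set.range (itin f U) ∧ t ∈ Set.range (itin f U) ∧
      s ≠ t ∧ ∀ j : ℤ, |j| ≤ (N:ℤ) → s j = t j := by
    by_contra hb
    push_neg at hb
    obtain ⟨N, hN⟩ := hb
    apply hinf
    have hfinIcc : (Set.Icc (-(N:ℤ)) (N:ℤ)).Finite := Set.finite_Icc _ _
    haveI := hfinIcc.to_subtype
    apply Set.Finite.of_finite_image
      (f := fun s : ℤ → Bool => fun j : (Set.Icc (-(N:ℤ)) (N:ℤ)) => s j)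
    · exact Set.Finite.subset Set.finite_univ (Set.subset_univ _)
    · intro s hs t ht heq
      by_contra hst
      obtain ⟨j, hjle, hjne⟩ := hN s t hs ht hst
      exact hjne (congrFun heq ⟨j, Set.mem_Icc.mpr (abs_le.mp hjle)⟩)
  choose sN tN hsN htN hneN hagN using b1
  have hmd : ∀ N, ∃ m : ℤ, sN N m ≠ tN N m ∧ ∀ j : ℤ, |j| < |m| → sN N j = tN N j :=
    fun N => exists_min_diff (hneN N)
  choose mN hmN1 hmN2 using hmd
  have hmbig : ∀ N : ℕ, (N:ℤ) < |mN N| := by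
    intro N
    by_contra hc
    push_neg at hc
    exact hmN1 N (hagN N (mN N) hc)
  have hcases : (∃ᶠ N in Filter.atTop, 0 < mN N) ∨ (∃ᶠ N in Filter.atTop, mN N < 0) := by
    by_contra hc
    push_neg at hc
    obtain ⟨N, h1, h2⟩ := (hc.1.and hc.2).exists
    have h0 : mN N = 0 := le_antisymm h1 h2
    have := hmbig N
    rw [h0] at this
    simp at this
    omega
  rcases hcases with hpos | hneg
  · apply onesided f hD hU (-1) (Or.inr rfl)
    intro N
    obtain ⟨N', hN'ge, hN'pos⟩ := Filter.frequently_atTop.mp hpos N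
    refine ⟨fun i => sN N' (i + mN N'), fun i => tN N' (i + mN N'),
      range_shift f (hsN N') (mN N'), range_shift f (htN N') (mN N'), ?_, ?_⟩
    · show sN N' (0 + mN N') ≠ tN N' (0 + mN N')
      rw [zero_add]
      exact hmN1 N'
    · intro i h1 h2
      apply hmN2 N'
      have hb := hmbig N'
      have habs : |mN N'| = mN N' := abs_of_pos hN'pos
      rw [habs] at hb ⊢
      have hiup : i ≤ -1 := by omega
      have hidn : -(N':ℤ) ≤ i := by
        have : -(N:ℤ) ≤ i := by omega
        have hNN' : (N:ℤ) ≤ (N':ℤ) := by exact_mod_cast hN'ge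
        omega
      rw [abs_of_pos (by omega : (0:ℤ) < i + mN N')]
      omega
  · apply onesided f hD hU 1 (Or.inl rfl)
    intro N
    obtain ⟨N', hN'ge, hN'neg⟩ := Filter.frequently_atTop.mp hneg N
    refine ⟨fun i => sN N' (i + mN N'), fun i => tN N' (i + mN N'),
      range_shift f (hsN N') (mN N'), range_shift f (htN N') (mN N'), ?_, ?_⟩
    · show sN N' (0 + mN N') ≠ tN N' (0 + mN N')
      rw [zero_add]
      exact hmN1 N'
    · intro i h1 h2
      apply hmN2 N'
      have hb := hmbig N'
      have habs : |mN N'| = -(mN N') := abs_of_neg hN'neg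
      rw [habs] at hb ⊢
      have hiup : 1 ≤ i := by omega
      have hidn : i ≤ (N':ℤ) := by
        have : i ≤ (N:ℤ) := by omega
        have hNN' : (N:ℤ) ≤ (N':ℤ) := by exact_mod_cast hN'ge
        omega
      rw [abs_of_neg (by omega : i + mN N' < 0)]
      omega

end Bwd2

section Bwd3

variable {X : Type*} [MetricSpace X] [CompactSpace X] (f : X ≃ₜ X)

theorem claimB_bwd (hD : Distal f) [TotallyDisconnectedSpace X] {x y : X} (hxy : x ≠ y) :
    ∃ γ > (0:ℝ), ¬ Relation.ReflTransGen (ORel f γ) x y := by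
  haveI : TotallySeparatedSpace X := loc_compact_t2_tot_disc_iff_tot_sep.mp inferInstance
  obtain ⟨U, hU, hxU, hyU⟩ := exists_isClopen_of_totally_separated hxy
  have hxyι : itin f U x ≠ itin f U y := by
    intro hc
    have h1 : itin f U x 0 = itin f U y 0 := congrFun hc 0
    have hx0 : itin f U x 0 = true := by
      show U.boolIndicator (hpow f 0 x) = true
      rw [hp_zero]
      exact (U.mem_iff_boolIndicator x).mp hxU
    have hy0 : itin f U y 0 = false := by
      show U.boolIndicator (hpow f 0 y) = false
      rw [hp_zero]
      exact (U.notMem_iff_boolIndicator y).mp hyU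
    rw [hx0, hy0] at h1
    simp at h1
  have hfin := itin_finite f hD hU
  set PP : Set ((ℤ → Bool) × (ℤ → Bool)) :=
    {p | p.1 ∈ Set.range (itin f U) ∧ p.2 ∈ Set.range (itin f U) ∧ p.1 ≠ p.2} with hPP
  have hPPfin : PP.Finite :=
    (hfin.prod hfin).subset (by rintro p ⟨h1, h2, -⟩; exact ⟨h1, h2⟩)
  have hexc : ∀ p : ((ℤ → Bool) × (ℤ → Bool)), p ∈ PP →
      ∃ c : ℝ, 0 < c ∧ ∀ z w : X, itin f U z = p.1 → itin f U w = p.2 → c ≤ dist z w := by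
    rintro ⟨s, t⟩ ⟨hs, ht, hst⟩
    set A := itin f U ⁻¹' {s} with hA
    set B := itin f U ⁻¹' {t} with hB
    have hAc : IsClosed A := IsClosed.preimage (itin_cont f hU) isClosed_singleton
    have hBc : IsClosed B := IsClosed.preimage (itin_cont f hU) isClosed_singleton
    have hAne : A.Nonempty := by obtain ⟨z, hz⟩ := hs; exact ⟨z, hz⟩
    have hBne : B.Nonempty := by obtain ⟨w, hw⟩ := ht; exact ⟨w, hw⟩
    have hprod : IsCompact (A ×ˢ B) := hAc.isCompact.prod hBc.isCompact
    obtain ⟨ab, habm, hmin⟩ := hprod.exists_isMinOn (hAne.prod hBne)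
      (continuous_dist.continuousOn)
    have hmem := Set.mem_prod.mp habm
    have hita : itin f U ab.1 = s := hmem.1
    have hitb : itin f U ab.2 = t := hmem.2
    refine ⟨dist ab.1 ab.2, ?_, ?_⟩
    · rw [dist_pos]
      intro hab
      apply hst
      rw [← hita, ← hitb, hab]
    · intro z w hz hw
      exact isMinOn_iff.mp hmin (z, w) (Set.mem_prod.mpr ⟨hz, hw⟩)
  choose! cf hcpos hcsep using hexc
  set F := hPPfin.toFinset with hF
  have hFne : F.Nonempty :=
    ⟨(itin f U x, itin f U y),
      hPPfin.mem_toFinset.mpr ⟨Set.mem_range_self x, Set.mem_range_self y, hxyι⟩⟩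
  set γ := F.inf' hFne cf with hγdef
  have hγpos : 0 < γ :=
    (Finset.lt_inf'_iff hFne).mpr fun p hp => hcpos p (hPPfin.mem_toFinset.mp hp)
  have hkey : ∀ u v : X, ORel f γ u v → itin f U u = itin f U v := by
    rintro u v ⟨n, hn⟩
    by_contra hne
    have hst : itin f U (hpow f n u) ≠ itin f U (hpow f n v) := by
      intro hc
      apply hne
      funext j
      have h2 := congrFun hc (j - n)
      rw [itin_shift, itin_shift] at h2
      rwa [sub_add_cancel] at h2
    have hmem : (itin f U (hpow f n u), itin f U (hpow f n v)) ∈ PP :=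
      ⟨Set.mem_range_self _, Set.mem_range_self _, hst⟩
    have h1 : cf (itin f U (hpow f n u), itin f U (hpow f n v))
        ≤ dist (hpow f n u) (hpow f n v) := hcsep _ hmem _ _ rfl rfl
    have h2 : γ ≤ cf (itin f U (hpow f n u), itin f U (hpow f n v)) :=
      Finset.inf'_le cf (hPPfin.mem_toFinset.mpr hmem)
    linarith
  have hind : ∀ z : X, Relation.ReflTransGen (ORel f γ) x z → itin f U x = itin f U z := by
    intro z hz
    induction hz with
    | refl => rfl
    | tail _ hbc ih => exact ih.trans (hkey _ _ hbc)
  exact ⟨γ, hγpos, fun hR => hxyι (hind y hR)⟩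

theorem claimA (hD : Distal f) [TotallyDisconnectedSpace X] :
    ∀ ε > (0:ℝ), ∃ γ > (0:ℝ),
      ∀ u v : X, Relation.ReflTransGen (ORel f γ) u v → dist u v ≤ ε := by
  intro ε hε
  by_contra hcon
  push_neg at hcon
  have hseq : ∀ k : ℕ, ∃ uv : X × X,
      Relation.ReflTransGen (ORel f (1/(k+1))) uv.1 uv.2 ∧ ε < dist uv.1 uv.2 := by
    intro k
    obtain ⟨u, v, h1, h2⟩ := hcon (1/(k+1)) (by positivity)
    exact ⟨(u, v), h1, h2⟩
  choose W hW1 hW2 using hseq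
  obtain ⟨uv, huv⟩ := exists_clusterPt_of_compactSpace (Filter.map W Filter.atTop)
  have huv' : MapClusterPt uv Filter.atTop W := huv
  have hfreq : ∀ S ∈ nhds uv, ∀ K : ℕ, ∃ k, K ≤ k ∧ W k ∈ S := by
    intro S hS K
    obtain ⟨k, h1, h2⟩ := Filter.frequently_atTop.mp ((mapClusterPt_iff_frequently.mp huv') S hS) K
    exact ⟨k, h1, h2⟩
  have hdist : ε ≤ dist uv.1 uv.2 := by
    by_contra hlt
    push_neg at hlt
    have hop : IsOpen {p : X × X | dist p.1 p.2 < ε} :=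
      isOpen_lt (continuous_fst.dist continuous_snd) continuous_const
    obtain ⟨k, -, hk⟩ := hfreq _ (hop.mem_nhds hlt) 0
    exact absurd (hW2 k) (not_lt.mpr hk.le)
  have hne : uv.1 ≠ uv.2 := by
    intro hc
    rw [hc, dist_self] at hdist
    linarith
  have hall : ∀ γ > (0:ℝ), Relation.ReflTransGen (ORel f γ) uv.1 uv.2 := by
    intro γ hγ
    obtain ⟨k0, hk0⟩ := exists_nat_one_div_lt hγ
    have hop : IsOpen {p : X × X | dist p.1 uv.1 < γ ∧ dist p.2 uv.2 < γ} :=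
      IsOpen.inter (isOpen_lt (continuous_fst.dist continuous_const) continuous_const)
        (isOpen_lt (continuous_snd.dist continuous_const) continuous_const)
    have hopm : uv ∈ {p : X × X | dist p.1 uv.1 < γ ∧ dist p.2 uv.2 < γ} := by
      constructor <;> simp [hγ]
    obtain ⟨k, hkge, hk⟩ := hfreq _ (hop.mem_nhds hopm) k0
    have hmono : (1:ℝ)/(k+1) ≤ γ := by
      have h2 : (1:ℝ)/(k+1) ≤ 1/(k0+1) := by
        apply one_div_le_one_div_of_le
        · positivity
        · have : (k0:ℝ) ≤ k := by exact_mod_cast hkge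
          linarith
      linarith
    have s1 : ORel f γ uv.1 (W k).1 := orel_of_dist f (by rw [dist_comm]; exact hk.1)
    have s2 : Relation.ReflTransGen (ORel f γ) (W k).1 (W k).2 :=
      Relation.ReflTransGen.mono (r := ORel f (1/((k:ℝ)+1))) (p := ORel f γ)
        (fun a b hab => orel_mono f hmono hab) _ _ (hW1 k)
    have s3 : ORel f γ (W k).2 uv.2 := orel_of_dist f hk.2
    exact (Relation.ReflTransGen.head s1 s2).tail s3
  obtain ⟨γ, hγ, hnR⟩ := claimB_bwd f hD hne
  exact hnR (hall γ hγ)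

theorem bwd_potp (hD : Distal f) [TotallyDisconnectedSpace X] : POTP f := by
  intro ε hε
  obtain ⟨γ, hγ, hA⟩ := claimA f hD ε hε
  refine ⟨γ/2, by positivity, fun ξ hξ => ?_⟩
  have hstep : ∀ n : ℤ, ORel f γ (f (ξ n)) (ξ (n+1)) := fun n =>
    orel_of_dist f (lt_of_le_of_lt (hξ n) (by linarith))
  have hmain : ∀ n : ℤ, Relation.ReflTransGen (ORel f γ) (hpow f n (ξ 0)) (ξ n) := by
    intro n
    induction n using Int.induction_on with
    | zero =>
      rw [hp_zero]
    | succ k ih =>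
      have h1 := rtg_map_f f ih
      rw [← hp_succ] at h1
      exact h1.tail (hstep k)
    | pred k ih =>
      have h1 := rtg_map_fsymm f ih
      rw [← hp_pred] at h1
      have h2 : ORel f γ (f (ξ (-(k:ℤ) - 1))) (ξ (-(k:ℤ) - 1 + 1)) := hstep (-(k:ℤ) - 1)
      have h3 : -(k:ℤ) - 1 + 1 = -(k:ℤ) := by ring
      rw [h3] at h2
      have h4 := orel_map_fsymm f h2
      rw [Homeomorph.symm_apply_apply] at h4
      exact h1.tail (orel_symm f h4)
  exact ⟨ξ 0, fun n => hA _ _ (hmain n)⟩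

end Bwd3

theorem stmt15 [CompactSpace X] (f : X ≃ₜ X) (h : Distal f) :
    POTP f ↔ TotallyDisconnectedSpace X := by
  constructor
  · intro hp
    exact potp_totdisc f h hp
  · intro htds
    exact bwd_potp f h
end
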